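/- arXiv:1502.06581 — 11 statements merged into one kernel-verified Lean document; each statement's English description precedes it below -/
import Mathlib

section
/- Let ν > 0 and l > 0, and let u : ℝ → ℝ be twice continuously differentiable on [0, l] and satisfy the stationary Burgers equation ν u''(x) = u(x) u'(x) for all x ∈ [0, l]. If u'(x₀) = 0 for some x₀ ∈ [0, l], then u is constant on [0, l]; consequently every nonconstant stationary solution is strictly monotone on [0, l]. -/
/-!
Along a solution, `u'` solves the linear equation `y' = (u / ν) y`. With `U` an antiderivative
of `u`, the integrating factor makes `u' · exp (-U / ν)` constant, so `u'` vanishes everywhere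
once it vanishes at one point, and then `u` is constant. If `u` is not constant, `u'` has no
zero, hence by Darboux's theorem a fixed sign, and `u` is strictly monotone.
-/

open Set

lemma exists_forall_hasDerivAt_of_continuousOn_Icc {f : ℝ → ℝ} {a b : ℝ} (hab : a ≤ b)
    (hf : ContinuousOn f (Icc a b)) : ∃ F : ℝ → ℝ, ∀ x ∈ Icc a b, HasDerivAt F (f x) x := by
  have hext : Continuous (IccExtend hab ((Icc a b).domRestrict f)) :=
    (continuousOn_iff_continuous_domRestrict.1 hf).Icc_extend'
  refine ⟨fun x ↦ ∫ t in a..x, IccExtend hab ((Icc a b).domRestrict f) t, fun x hx ↦ ?_⟩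
  have h := (hext.integral_hasStrictDerivAt a x).hasDerivAt
  rwa [IccExtend_of_mem hab _ hx] at h

lemma eq_of_forall_hasDerivAt_zero_Icc {f : ℝ → ℝ} {a b x y : ℝ}
    (hf : ∀ z ∈ Icc a b, HasDerivAt f 0 z) (hx : x ∈ Icc a b) (hy : y ∈ Icc a b) :
    f x = f y := by
  have hconst := constant_of_has_deriv_right_zero
    (fun z hz ↦ (hf z hz).continuousAt.continuousWithinAt)
    (fun z hz ↦ (hf z (Ico_subset_Icc_self hz)).hasDerivWithinAt)
  rw [hconst x hx, hconst y hy]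

lemma eq_zero_of_hasDerivAt_eq_mul_self {y c : ℝ → ℝ} {a b x₀ : ℝ}
    (hc : ContinuousOn c (Icc a b)) (hy : ∀ x ∈ Icc a b, HasDerivAt y (c x * y x) x)
    (hx₀ : x₀ ∈ Icc a b) (hy₀ : y x₀ = 0) : ∀ x ∈ Icc a b, y x = 0 := by
  obtain ⟨C, hC⟩ := exists_forall_hasDerivAt_of_continuousOn_Icc (hx₀.1.trans hx₀.2) hc
  have hw : ∀ x ∈ Icc a b, HasDerivAt (fun z ↦ y z * Real.exp (-C z)) 0 x := fun x hx ↦ by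
    have h := (hy x hx).mul (hC x hx).fun_neg.exp
    rwa [show c x * y x * Real.exp (-C x) + y x * (Real.exp (-C x) * -c x) = 0 by ring] at h
  intro x hx
  have hwx := eq_of_forall_hasDerivAt_zero_Icc hw hx hx₀
  simpa [hy₀, Real.exp_ne_zero] using hwx

lemma strictMonoOn_or_strictAntiOn_of_hasDerivWithinAt_ne_zero {f f' : ℝ → ℝ} {s : Set ℝ}
    (hs : Convex ℝ s) (hf : ∀ x ∈ s, HasDerivWithinAt f (f' x) s x)
    (hf' : ∀ x ∈ s, f' x ≠ 0) : StrictMonoOn f s ∨ StrictAntiOn f s := by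
  have hcont : ContinuousOn f s := fun x hx ↦ (hf x hx).continuousWithinAt
  have hint : ∀ x ∈ interior s, HasDerivWithinAt f (f' x) (interior s) x := fun x hx ↦
    (hf x (interior_subset hx)).mono interior_subset
  rcases hasDerivWithinAt_forall_lt_or_forall_gt_of_forall_ne hs hf hf' with hneg | hpos
  · exact .inr <| strictAntiOn_of_hasDerivWithinAt_neg hs hcont hint
      fun x hx ↦ hneg x (interior_subset hx)
  · exact .inl <| strictMonoOn_of_hasDerivWithinAt_pos hs hcont hint
      fun x hx ↦ hpos x (interior_subset hx)

theorem burgers_stationary_const_or_strict_monotone_general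
    (ν l : ℝ) (hν : 0 < ν)
    (u u' u'' : ℝ → ℝ)
    (hder1 : ∀ x ∈ Set.Icc 0 l, HasDerivAt u (u' x) x)
    (hder2 : ∀ x ∈ Set.Icc 0 l, HasDerivAt u' (u'' x) x)
    (hode : ∀ x ∈ Set.Icc 0 l, ν * u'' x = u x * u' x) :
    (∀ x₀ ∈ Set.Icc 0 l, u' x₀ = 0 → ∀ x ∈ Set.Icc 0 l, u x = u x₀) ∧
    ((¬ ∃ c : ℝ, ∀ x ∈ Set.Icc 0 l, u x = c) →
      StrictMonoOn u (Set.Icc 0 l) ∨ StrictAntiOn u (Set.Icc 0 l)) := by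
  have hlinear : ∀ x ∈ Icc 0 l, HasDerivAt u' (u x / ν * u' x) x := fun x hx ↦ by
    convert hder2 x hx using 1
    field_simp
    exact (hode x hx).symm
  have hcoeff : ContinuousOn (fun x ↦ u x / ν) (Icc 0 l) := fun x hx ↦
    (hder1 x hx).continuousAt.continuousWithinAt.div_const ν
  have hconst : ∀ x₀ ∈ Icc 0 l, u' x₀ = 0 → ∀ x ∈ Icc 0 l, u x = u x₀ := by
    intro x₀ hx₀ hu'x₀ x hx
    have hu'zero := eq_zero_of_hasDerivAt_eq_mul_self hcoeff hlinear hx₀ hu'x₀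
    exact eq_of_forall_hasDerivAt_zero_Icc (fun z hz ↦ hu'zero z hz ▸ hder1 z hz) hx hx₀
  refine ⟨hconst, fun hnonconst ↦ ?_⟩
  have hu'ne : ∀ x ∈ Icc 0 l, u' x ≠ 0 := fun x hx hu'x ↦
    hnonconst ⟨u x, hconst x hx hu'x⟩
  exact strictMonoOn_or_strictAntiOn_of_hasDerivWithinAt_ne_zero (convex_Icc 0 l)
    (fun x hx ↦ (hder1 x hx).hasDerivWithinAt) hu'ne

/-- If a stationary solution of Burgers' equation (`ν u'' = u u'` on `[0, l]`) has
`u'(x₀) = 0` at some point `x₀ ∈ [0, l]`, then `u` is constant on `[0, l]`;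
consequently every nonconstant stationary solution is strictly monotone on `[0, l]`. -/
theorem burgers_stationary_const_or_strict_monotone
    (ν l : ℝ) (hν : 0 < ν) (hl : 0 < l)
    (u u' u'' : ℝ → ℝ)
    (hder1 : ∀ x ∈ Set.Icc 0 l, HasDerivAt u (u' x) x)
    (hder2 : ∀ x ∈ Set.Icc 0 l, HasDerivAt u' (u'' x) x)
    (hcont : ContinuousOn u'' (Set.Icc 0 l))
    (hode : ∀ x ∈ Set.Icc 0 l, ν * u'' x = u x * u' x) :
    (∀ x₀ ∈ Set.Icc 0 l, u' x₀ = 0 → ∀ x ∈ Set.Icc 0 l, u x = u x₀) ∧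
    ((¬ ∃ c : ℝ, ∀ x ∈ Set.Icc 0 l, u x = c) →
      StrictMonoOn u (Set.Icc 0 l) ∨ StrictAntiOn u (Set.Icc 0 l)) :=
  burgers_stationary_const_or_strict_monotone_general ν l hν u u' u'' hder1 hder2 hode
end

section
/- Let ν > 0 and let φ : ℝ × ℝ → ℝ be such that φ(x, t) ≠ 0 for all x, t, φ is twice continuously differentiable, and φ satisfies the heat equation ∂_t φ = ν ∂_xx φ. Then the function u(x, t) := −2ν (∂_x φ(x, t)) / φ(x, t) satisfies the viscous Burgers equation ∂_t u + u ∂_x u = ν ∂_xx u. -/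
/-!
With `ψ = log |φ|` the Cole–Hopf field is `u = -2ν ψ_x`, and the heat equation for `φ` becomes the
potential Burgers equation `ψ_t = ν (ψ_xx + ψ_x ^ 2)`. Differentiating it in `x` and exchanging
`ψ_tx = ψ_xt` gives the Burgers equation for `u`; the heat equation also supplies the third
`x`-derivative `ψ_xxx`, which the `C²` hypothesis alone does not.
-/

open Real

section Partial

variable {E : Type*} [NormedAddCommGroup E] [NormedSpace ℝ E]

noncomputable def partialFst (f : ℝ × ℝ → E) (p : ℝ × ℝ) : E := deriv (fun x => f (x, p.2)) p.1

noncomputable def partialSnd (f : ℝ × ℝ → E) (p : ℝ × ℝ) : E := deriv (fun t => f (p.1, t)) p.2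

variable {f : ℝ × ℝ → E} {p : ℝ × ℝ}

theorem DifferentiableAt.hasDerivAt_fderiv_fst (hf : DifferentiableAt ℝ f p) :
    HasDerivAt (fun x => f (x, p.2)) (fderiv ℝ f p (1, 0)) p.1 :=
  hf.hasFDerivAt.comp_hasDerivAt p.1 ((hasDerivAt_id p.1).prodMk (hasDerivAt_const p.1 p.2))

theorem DifferentiableAt.hasDerivAt_fderiv_snd (hf : DifferentiableAt ℝ f p) :
    HasDerivAt (fun t => f (p.1, t)) (fderiv ℝ f p (0, 1)) p.2 :=
  hf.hasFDerivAt.comp_hasDerivAt p.2 ((hasDerivAt_const p.2 p.1).prodMk (hasDerivAt_id p.2))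

theorem DifferentiableAt.partialFst_eq_fderiv (hf : DifferentiableAt ℝ f p) :
    partialFst f p = fderiv ℝ f p (1, 0) :=
  hf.hasDerivAt_fderiv_fst.deriv

theorem DifferentiableAt.partialSnd_eq_fderiv (hf : DifferentiableAt ℝ f p) :
    partialSnd f p = fderiv ℝ f p (0, 1) :=
  hf.hasDerivAt_fderiv_snd.deriv

theorem DifferentiableAt.hasDerivAt_partialFst (hf : DifferentiableAt ℝ f p) :
    HasDerivAt (fun x => f (x, p.2)) (partialFst f p) p.1 :=
  hf.partialFst_eq_fderiv ▸ hf.hasDerivAt_fderiv_fst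

theorem DifferentiableAt.hasDerivAt_partialSnd (hf : DifferentiableAt ℝ f p) :
    HasDerivAt (fun t => f (p.1, t)) (partialSnd f p) p.2 :=
  hf.partialSnd_eq_fderiv ▸ hf.hasDerivAt_fderiv_snd

theorem Differentiable.partialFst_eq_fderiv (hf : Differentiable ℝ f) :
    partialFst f = fun p => fderiv ℝ f p (1, 0) :=
  funext fun p => (hf p).partialFst_eq_fderiv

theorem Differentiable.partialSnd_eq_fderiv (hf : Differentiable ℝ f) :
    partialSnd f = fun p => fderiv ℝ f p (0, 1) :=
  funext fun p => (hf p).partialSnd_eq_fderiv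

variable {m n : WithTop ℕ∞}

theorem ContDiff.contDiff_partialFst (hf : ContDiff ℝ n f) (hmn : m + 1 ≤ n) :
    ContDiff ℝ m (partialFst f) := by
  rw [(hf.differentiable (one_pos.trans_le (le_add_self.trans hmn)).ne').partialFst_eq_fderiv]
  exact (hf.fderiv_right hmn).clm_apply contDiff_const

theorem ContDiff.contDiff_partialSnd (hf : ContDiff ℝ n f) (hmn : m + 1 ≤ n) :
    ContDiff ℝ m (partialSnd f) := by
  rw [(hf.differentiable (one_pos.trans_le (le_add_self.trans hmn)).ne').partialSnd_eq_fderiv]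
  exact (hf.fderiv_right hmn).clm_apply contDiff_const

theorem ContDiff.partialSnd_partialFst (hf : ContDiff ℝ 2 f) :
    partialSnd (partialFst f) = partialFst (partialSnd f) := by
  have hdf : Differentiable ℝ (fderiv ℝ f) :=
    (hf.fderiv_right (m := 1) le_rfl).differentiable one_ne_zero
  funext p
  rw [(hf.contDiff_partialFst (m := 1) le_rfl).differentiable one_ne_zero p |>.partialSnd_eq_fderiv,
    (hf.contDiff_partialSnd (m := 1) le_rfl).differentiable one_ne_zero p |>.partialFst_eq_fderiv,
    (hf.differentiable two_ne_zero).partialFst_eq_fderiv,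
    (hf.differentiable two_ne_zero).partialSnd_eq_fderiv,
    fderiv_clm_apply (hdf p) (differentiableAt_const _),
    fderiv_clm_apply (hdf p) (differentiableAt_const _)]
  simpa using (hf.contDiffAt.isSymmSndFDerivAt (by simp)) (0, 1) (1, 0)

end Partial

section ColeHopf

variable {f g : ℝ × ℝ → ℝ} {p : ℝ × ℝ}

theorem DifferentiableAt.partialFst_log (hf : DifferentiableAt ℝ f p) (h : f p ≠ 0) :
    partialFst (fun q => Real.log (f q)) p = partialFst f p / f p :=
  (hf.hasDerivAt_partialFst.log h).deriv

theorem DifferentiableAt.partialSnd_log (hf : DifferentiableAt ℝ f p) (h : f p ≠ 0) :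
    partialSnd (fun q => Real.log (f q)) p = partialSnd f p / f p :=
  (hf.hasDerivAt_partialSnd.log h).deriv

theorem DifferentiableAt.partialFst_div (hf : DifferentiableAt ℝ f p) (hg : DifferentiableAt ℝ g p)
    (h : g p ≠ 0) :
    partialFst (fun q => f q / g q) p = (partialFst f p * g p - f p * partialFst g p) / g p ^ 2 :=
  (hf.hasDerivAt_partialFst.div hg.hasDerivAt_partialFst h).deriv

theorem potentialBurgers_log_of_heat {ν : ℝ} {φ : ℝ × ℝ → ℝ} (hφ : ContDiff ℝ 2 φ)
    (hφ0 : ∀ p, φ p ≠ 0) (hheat : ∀ p, partialSnd φ p = ν * partialFst (partialFst φ) p)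
    (p : ℝ × ℝ) :
    partialSnd (fun q => log (φ q)) p =
      ν * (partialFst (partialFst fun q => log (φ q)) p + partialFst (fun q => log (φ q)) p ^ 2) := by
  have hd := hφ.differentiable two_ne_zero
  have hdx := (hφ.contDiff_partialFst (m := 1) le_rfl).differentiable one_ne_zero
  have hψx : partialFst (fun q => log (φ q)) = fun q => partialFst φ q / φ q :=
    funext fun q => (hd q).partialFst_log (hφ0 q)
  rw [(hd p).partialSnd_log (hφ0 p), hψx, (hdx p).partialFst_div (hd p) (hφ0 p), hheat p]
  field_simp [hφ0 p]
  ring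

theorem burgers_of_potentialBurgers {ν : ℝ} (hν : ν ≠ 0) {ψ : ℝ × ℝ → ℝ} (hψ : ContDiff ℝ 2 ψ)
    (hpot : ∀ p, partialSnd ψ p = ν * (partialFst (partialFst ψ) p + partialFst ψ p ^ 2))
    (u : ℝ → ℝ → ℝ) (hu : ∀ x t, u x t = -2 * ν * partialFst ψ (x, t)) (x t : ℝ) :
    deriv (fun s => u x s) t + u x t * deriv (fun y => u y t) x
      = ν * deriv (fun y => deriv (fun z => u z t) y) x := by
  have hψx := (hψ.contDiff_partialFst (m := 1) le_rfl).differentiable one_ne_zero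
  have hψt := (hψ.contDiff_partialSnd (m := 1) le_rfl).differentiable one_ne_zero
  have hψxx : partialFst (partialFst ψ) = fun p => partialSnd ψ p / ν - partialFst ψ p ^ 2 := by
    funext p
    rw [hpot p]
    field_simp
    ring
  have hψxxx : partialFst (partialFst (partialFst ψ)) (x, t) = partialFst (partialSnd ψ) (x, t) / ν
      - 2 * partialFst ψ (x, t) * partialFst (partialFst ψ) (x, t) := by
    rw [hψxx]
    refine (((hψt _).hasDerivAt_partialFst.div_const ν).sub
      ((hψx _).hasDerivAt_partialFst.pow 2)).deriv.trans ?_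
    simp [hψxx]
  obtain rfl : u = fun x t => -2 * ν * partialFst ψ (x, t) := funext₂ hu
  simp only [deriv_const_mul_field']
  change -2 * ν * partialSnd (partialFst ψ) (x, t)
      + -2 * ν * partialFst ψ (x, t) * (-2 * ν * partialFst (partialFst ψ) (x, t))
    = ν * (-2 * ν * partialFst (partialFst (partialFst ψ)) (x, t))
  rw [hψ.partialSnd_partialFst, hψxxx]
  field_simp
  ring

end ColeHopf

/-- The Cole–Hopf transformation: if `φ` is a nonvanishing, twice continuously
differentiable solution of the heat equation `φ_t = ν φ_xx`, then
`u = −2ν φ_x / φ` solves the viscous Burgers equation `u_t + u u_x = ν u_xx`. -/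
theorem coleHopf_heat_to_burgers
    (ν : ℝ) (hν : 0 < ν)
    (φ : ℝ × ℝ → ℝ)
    (hφ0 : ∀ x t : ℝ, φ (x, t) ≠ 0)
    (hφ : ContDiff ℝ 2 φ)
    (hheat : ∀ x t : ℝ,
      deriv (fun s => φ (x, s)) t = ν * deriv (fun y => deriv (fun z => φ (z, t)) y) x)
    (u : ℝ → ℝ → ℝ)
    (hu : ∀ x t : ℝ, u x t = -2 * ν * deriv (fun y => φ (y, t)) x / φ (x, t)) :
    ∀ x t : ℝ,
      deriv (fun s => u x s) t + u x t * deriv (fun y => u y t) x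
        = ν * deriv (fun y => deriv (fun z => u z t) y) x := by
  have hφ0' : ∀ p, φ p ≠ 0 := fun p => hφ0 p.1 p.2
  refine burgers_of_potentialBurgers hν.ne' (hφ.log hφ0')
    (potentialBurgers_log_of_heat hφ hφ0' fun p => hheat p.1 p.2) u fun x t => ?_
  rw [hu, (hφ.differentiable two_ne_zero _).partialFst_log (hφ0 x t), mul_div_assoc]
  rfl
end

section
/- Let ν > 0, l > 0, and A, B ∈ ℝ with A > B. If u : ℝ → ℝ is twice continuously differentiable on [0, l], satisfies the stationary Burgers equation ν u''(x) = u(x) u'(x) on [0, l], and u(0) = A, u(l) = B, then there exist k₀ > 0 and x₀ ∈ ℝ such that u(x) = −2ν k₀ tanh(k₀ (x − x₀)) for all x ∈ [0, l]. -/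
/-!
The equation says `(ν u' - u² / 2)' = 0`, so `ν u' = u² / 2 + C`. Since `u` drops
from `A` to `B`, somewhere `u' < 0`, which forces `C < 0`; writing `C = -2ν²k²`, the profile
`-2νk tanh (k (x - x₀))` solves the same first-order equation, and `x₀` can be chosen so that it
agrees with `u` at one interior point. The right-hand side `(y² / 2 + C) / ν` is smooth, hence
locally Lipschitz, so the two solutions coincide on `[0, l]`.
-/

open Real Set

theorem Real.hasDerivAt_tanh (x : ℝ) : HasDerivAt tanh (1 - tanh x ^ 2) x := by
  have hcosh : cosh x ≠ 0 := (cosh_pos x).ne'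
  have h := (hasDerivAt_sinh x).div (hasDerivAt_cosh x) hcosh
  rw [show sinh / cosh = tanh from funext fun y => (tanh_eq_sinh_div_cosh y).symm] at h
  refine h.congr_deriv ?_
  rw [tanh_eq_sinh_div_cosh]
  field_simp

theorem ODE_solution_unique_of_mem_Icc_of_locallyLipschitz {E : Type*} [NormedAddCommGroup E]
    [NormedSpace ℝ E] {g : E → E} (hg : LocallyLipschitz g) {f h : ℝ → E} {a b t₀ : ℝ}
    (ht : t₀ ∈ Ioo a b) (hf : ContinuousOn f (Icc a b))
    (hf' : ∀ t ∈ Ioo a b, HasDerivAt f (g (f t)) t) (hh : ContinuousOn h (Icc a b))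
    (hh' : ∀ t ∈ Ioo a b, HasDerivAt h (g (h t)) t) (heq : f t₀ = h t₀) :
    EqOn f h (Icc a b) := by
  set s := f '' Icc a b ∪ h '' Icc a b
  have hs : IsCompact s := (isCompact_Icc.image_of_continuousOn hf).union
    (isCompact_Icc.image_of_continuousOn hh)
  obtain ⟨K, hK⟩ := hg.locallyLipschitzOn.exists_lipschitzOnWith_of_compact hs
  exact ODE_solution_unique_of_mem_Icc (s := fun _ => s) (fun _ _ => hK) ht hf hf'
    (fun t ht => Or.inl ⟨t, Ioo_subset_Icc_self ht, rfl⟩) hh hh'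
    (fun t ht => Or.inr ⟨t, Ioo_subset_Icc_self ht, rfl⟩) heq

theorem burgers_first_integral {ν a b : ℝ} {u u' u'' : ℝ → ℝ}
    (hder1 : ∀ x ∈ Icc a b, HasDerivAt u (u' x) x)
    (hder2 : ∀ x ∈ Icc a b, HasDerivAt u' (u'' x) x)
    (hode : ∀ x ∈ Icc a b, ν * u'' x = u x * u' x) :
    ∃ C, ∀ x ∈ Icc a b, ν * u' x = u x ^ 2 / 2 + C := by
  set E := fun x => ν * u' x - u x ^ 2 / 2
  have hE : ∀ x ∈ Icc a b, HasDerivAt E 0 x := by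
    intro x hx
    refine (((hder2 x hx).const_mul ν).sub (((hder1 x hx).pow 2).div_const 2)).congr_deriv ?_
    rw [hode x hx]
    ring
  have hconst := constant_of_has_deriv_right_zero
    (fun x hx => (hE x hx).continuousAt.continuousWithinAt)
    (fun x hx => (hE x (Ico_subset_Icc_self hx)).hasDerivWithinAt)
  refine ⟨E a, fun x hx => ?_⟩
  have hx := hconst x hx
  simp only [E] at hx ⊢
  linarith

noncomputable def burgersTanh (ν k x₀ x : ℝ) : ℝ := -2 * ν * k * tanh (k * (x - x₀))

theorem hasDerivAt_burgersTanh {ν : ℝ} (hν : ν ≠ 0) (k x₀ x : ℝ) :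
    HasDerivAt (burgersTanh ν k x₀)
      ((burgersTanh ν k x₀ x ^ 2 / 2 - 2 * ν ^ 2 * k ^ 2) / ν) x := by
  have hlin : HasDerivAt (fun y => k * (y - x₀)) k x := by
    simpa using ((hasDerivAt_id x).sub_const x₀).const_mul k
  refine (((hasDerivAt_tanh _).comp x hlin).const_mul (-2 * ν * k)).congr_deriv ?_
  unfold burgersTanh
  field_simp
  ring

theorem exists_burgersTanh_eq {ν k y : ℝ} (hν : 0 < ν) (hk : 0 < k) (hy : |y| < 2 * ν * k)
    (c : ℝ) : ∃ x₀, burgersTanh ν k x₀ c = y := by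
  have hνk : 0 < 2 * ν * k := by positivity
  have hmem : -y / (2 * ν * k) ∈ Ioo (-1) 1 := by
    rw [mem_Ioo, lt_div_iff₀ hνk, div_lt_iff₀ hνk]
    constructor <;> linarith [abs_lt.mp hy]
  refine ⟨c - artanh (-y / (2 * ν * k)) / k, ?_⟩
  rw [burgersTanh, show k * (c - (c - artanh (-y / (2 * ν * k)) / k)) = artanh (-y / (2 * ν * k))
    by field_simp; ring, tanh_artanh hmem]
  field_simp

theorem burgers_stationary_dirichlet_decreasing_tanh_general
    (ν l A B : ℝ) (hν : 0 < ν) (hl : 0 < l) (hAB : A > B)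
    (u u' u'' : ℝ → ℝ)
    (hder1 : ∀ x ∈ Set.Icc 0 l, HasDerivAt u (u' x) x)
    (hder2 : ∀ x ∈ Set.Icc 0 l, HasDerivAt u' (u'' x) x)
    (hode : ∀ x ∈ Set.Icc 0 l, ν * u'' x = u x * u' x)
    (hbc0 : u 0 = A) (hbcl : u l = B) :
    ∃ k₀ : ℝ, 0 < k₀ ∧ ∃ x₀ : ℝ, ∀ x ∈ Set.Icc 0 l,
      u x = -2 * ν * k₀ * Real.tanh (k₀ * (x - x₀)) := by
  obtain ⟨C, hC⟩ := burgers_first_integral hder1 hder2 hode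
  have hu : ContinuousOn u (Icc 0 l) := HasDerivAt.continuousOn hder1
  obtain ⟨c, hc, hslope⟩ := exists_hasDerivAt_eq_slope u u' hl hu
    fun x hx => hder1 x (Ioo_subset_Icc_self hx)
  have hu'c : ν * u' c < 0 := by
    rw [hslope, hbc0, hbcl]
    exact mul_neg_of_pos_of_neg hν (div_neg_of_neg_of_pos (by linarith) (by linarith))
  have hCc := hC c (Ioo_subset_Icc_self hc)
  obtain ⟨k, hk, hCk⟩ : ∃ k, 0 < k ∧ C = -2 * ν ^ 2 * k ^ 2 := by
    refine ⟨Real.sqrt (-C / 2) / ν, div_pos (sqrt_pos.mpr (by nlinarith)) hν, ?_⟩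
    rw [div_pow, sq_sqrt (by nlinarith)]
    field_simp
  have huc : |u c| < 2 * ν * k := abs_lt_of_sq_lt_sq (by nlinarith) (by positivity)
  obtain ⟨x₀, hx₀⟩ := exists_burgersTanh_eq hν hk huc c
  have hriccati : LocallyLipschitz fun y : ℝ => (y ^ 2 / 2 - 2 * ν ^ 2 * k ^ 2) / ν :=
    ContDiff.locallyLipschitz (by fun_prop)
  have hu' : ∀ x ∈ Ioo 0 l, HasDerivAt u ((u x ^ 2 / 2 - 2 * ν ^ 2 * k ^ 2) / ν) x := by
    intro x hx
    refine (hder1 x (Ioo_subset_Icc_self hx)).congr_deriv ?_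
    rw [eq_div_iff hν.ne', mul_comm, hC x (Ioo_subset_Icc_self hx), hCk]
    ring
  have hv := hasDerivAt_burgersTanh hν.ne' k x₀
  exact ⟨k, hk, x₀, ODE_solution_unique_of_mem_Icc_of_locallyLipschitz hriccati hc hu hu'
    (HasDerivAt.continuousOn fun x _ => hv x) (fun x _ => hv x) hx₀.symm⟩

/-- When `A > B`, any stationary solution of Burgers' equation on `[0, l]` with
Dirichlet boundary values `u(0) = A`, `u(l) = B` has the form
`u(x) = −2ν k₀ tanh(k₀ (x − x₀))`. -/
theorem burgers_stationary_dirichlet_decreasing_tanh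
    (ν l A B : ℝ) (hν : 0 < ν) (hl : 0 < l) (hAB : A > B)
    (u u' u'' : ℝ → ℝ)
    (hder1 : ∀ x ∈ Set.Icc 0 l, HasDerivAt u (u' x) x)
    (hder2 : ∀ x ∈ Set.Icc 0 l, HasDerivAt u' (u'' x) x)
    (hcont : ContinuousOn u'' (Set.Icc 0 l))
    (hode : ∀ x ∈ Set.Icc 0 l, ν * u'' x = u x * u' x)
    (hbc0 : u 0 = A) (hbcl : u l = B) :
    ∃ k₀ : ℝ, 0 < k₀ ∧ ∃ x₀ : ℝ, ∀ x ∈ Set.Icc 0 l,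
      u x = -2 * ν * k₀ * Real.tanh (k₀ * (x - x₀)) :=
  burgers_stationary_dirichlet_decreasing_tanh_general ν l A B hν hl hAB u u' u'' hder1 hder2 hode
    hbc0 hbcl
end

section
/- Let ν > 0, l > 0, and A ∈ ℝ. If u : ℝ → ℝ is twice continuously differentiable on [0, l], satisfies the stationary Burgers equation ν u''(x) = u(x) u'(x) on [0, l], and u(0) = u(l) = A, then u(x) = A for all x ∈ [0, l]. -/
/-!
Since `u(0) = u(l)`, Rolle's theorem gives a zero of `u'`. The equation says that `w = u'` solves
the linear equation `w' = (u / ν) w`, so `w · exp (-G)` is constant for a primitive `G` of `u / ν`;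
hence `u'` vanishes identically and `u` is the constant `A`.
-/

open Set

section

variable {E : Type*} [NormedAddCommGroup E] [NormedSpace ℝ E] {a b : ℝ}

theorem eq_of_hasDerivAt_zero_on_Icc {f : ℝ → E} {x y : ℝ}
    (hf : ∀ z ∈ Icc a b, HasDerivAt f 0 z) (hx : x ∈ Icc a b) (hy : y ∈ Icc a b) :
    f x = f y := by
  have hconst := constant_of_has_deriv_right_zero
    (fun z hz ↦ (hf z hz).continuousAt.continuousWithinAt)
    fun z hz ↦ (hf z (Ico_subset_Icc_self hz)).hasDerivWithinAt
  rw [hconst x hx, hconst y hy]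

theorem exists_hasDerivAt_eq_of_continuousOn_Icc [CompleteSpace E] {p : ℝ → E} (hab : a ≤ b)
    (hp : ContinuousOn p (Icc a b)) : ∃ G : ℝ → E, ∀ x ∈ Icc a b, HasDerivAt G (p x) x := by
  set P := IccExtend hab ((Icc a b).domRestrict p)
  have hP : Continuous P := continuous_IccExtend_iff.2 hp.domRestrict
  refine ⟨fun x ↦ ∫ t in a..x, P t, fun x hx ↦ ?_⟩
  have hPx : P x = p x := IccExtend_of_mem hab _ hx
  exact hPx ▸ (hP.integral_hasStrictDerivAt a x).hasDerivAt

theorem eq_zero_of_hasDerivAt_smul_self_on_Icc {ξ : ℝ} {p : ℝ → ℝ} {w : ℝ → E}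
    (hp : ContinuousOn p (Icc a b)) (hw : ∀ x ∈ Icc a b, HasDerivAt w (p x • w x) x)
    (hξ : ξ ∈ Icc a b) (hwξ : w ξ = 0) : ∀ x ∈ Icc a b, w x = 0 := by
  obtain ⟨G, hG⟩ := exists_hasDerivAt_eq_of_continuousOn_Icc (hξ.1.trans hξ.2) hp
  have hF : ∀ x ∈ Icc a b, HasDerivAt (fun x ↦ Real.exp (-G x) • w x) 0 x := fun x hx ↦
    ((hG x hx).neg.exp.smul (hw x hx)).congr_deriv (by rw [smul_smul, ← add_smul]; simp)
  intro x hx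
  have := eq_of_hasDerivAt_zero_on_Icc hF hx hξ
  simpa [hwξ] using this

end

theorem burgers_stationary_dirichlet_equal_const_general
    (ν l A : ℝ) (hν : 0 < ν) (hl : 0 < l)
    (u u' u'' : ℝ → ℝ)
    (hder1 : ∀ x ∈ Set.Icc 0 l, HasDerivAt u (u' x) x)
    (hder2 : ∀ x ∈ Set.Icc 0 l, HasDerivAt u' (u'' x) x)
    (hode : ∀ x ∈ Set.Icc 0 l, ν * u'' x = u x * u' x)
    (hbc0 : u 0 = A) (hbcl : u l = A) :
    ∀ x ∈ Set.Icc 0 l, u x = A := by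
  have hu : ContinuousOn u (Icc 0 l) := fun x hx ↦ (hder1 x hx).continuousAt.continuousWithinAt
  obtain ⟨ξ, hξ, hu'ξ⟩ := exists_hasDerivAt_eq_zero hl hu (hbc0.trans hbcl.symm)
    fun x hx ↦ hder1 x (Ioo_subset_Icc_self hx)
  have hu'_linear : ∀ x ∈ Icc 0 l, HasDerivAt u' (u x / ν * u' x) x := fun x hx ↦
    (hder2 x hx).congr_deriv (by rw [div_mul_eq_mul_div, eq_div_iff hν.ne', mul_comm, hode x hx])
  have hu'_zero := eq_zero_of_hasDerivAt_smul_self_on_Icc (hu.div_const ν) hu'_linear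
    (Ioo_subset_Icc_self hξ) hu'ξ
  intro x hx
  rw [← hbc0]
  exact eq_of_hasDerivAt_zero_on_Icc (fun y hy ↦ hu'_zero y hy ▸ hder1 y hy) hx
    (left_mem_Icc.2 hl.le)

/-- When `A = B`, the stationary solution of Burgers' equation on `[0, l]` with
Dirichlet boundary values `u(0) = u(l) = A` is the constant `A`. -/
theorem burgers_stationary_dirichlet_equal_const
    (ν l A : ℝ) (hν : 0 < ν) (hl : 0 < l)
    (u u' u'' : ℝ → ℝ)
    (hder1 : ∀ x ∈ Set.Icc 0 l, HasDerivAt u (u' x) x)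
    (hder2 : ∀ x ∈ Set.Icc 0 l, HasDerivAt u' (u'' x) x)
    (hcont : ContinuousOn u'' (Set.Icc 0 l))
    (hode : ∀ x ∈ Set.Icc 0 l, ν * u'' x = u x * u' x)
    (hbc0 : u 0 = A) (hbcl : u l = A) :
    ∀ x ∈ Set.Icc 0 l, u x = A :=
  burgers_stationary_dirichlet_equal_const_general ν l A hν hl u u' u'' hder1 hder2 hode hbc0 hbcl
end

section
/- Let ν > 0, l > 0, and A, B ∈ ℝ with A < B, and set H = 2ν(B − A) − l·A·B. Then there exists x₀ ∈ ℝ with x₀ ∉ [0, l] such that the function u(x) = −2ν/(x − x₀) satisfies u(0) = A and u(l) = B, if and only if H = 0. -/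
/-!
Writing `u(x) = -2ν/(x - x₀)`, the two boundary conditions read `A x₀ = 2ν` and
`B (l - x₀) = -2ν`; eliminating `x₀` gives exactly `H = 0`. Conversely, when `H = 0` the
first condition forces the pole `x₀ = 2ν/A` (here `A ≠ 0`, since `A = 0` would give `B = 0`),
and `H = 0` is then the second condition. The pole lies left of `0` when `A < 0`; when `A > 0`,
`H = 0` gives `l A B = 2ν (B - A) < 2ν B`, i.e. `l < 2ν/A`.
-/

open Set

noncomputable section

def burgersProfile (ν x₀ x : ℝ) : ℝ := -2 * ν / (x - x₀)

def burgersH (ν l A B : ℝ) : ℝ := 2 * ν * (B - A) - l * A * B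

variable {ν l A B : ℝ}

theorem burgersH_eq_zero_of_profile {x₀ : ℝ} (h₀ : x₀ ≠ 0) (hₗ : x₀ ≠ l)
    (hA : burgersProfile ν x₀ 0 = A) (hB : burgersProfile ν x₀ l = B) :
    burgersH ν l A B = 0 := by
  rw [burgersProfile, div_eq_iff (sub_ne_zero.2 h₀.symm)] at hA
  rw [burgersProfile, div_eq_iff (sub_ne_zero.2 hₗ.symm)] at hB
  rw [burgersH]
  linear_combination (-B) * hA + A * hB

theorem ne_zero_of_burgersH_eq_zero (hν : ν ≠ 0) (hAB : A ≠ B) (hH : burgersH ν l A B = 0) :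
    A ≠ 0 := by
  rintro rfl
  have hB : B = 0 := by simpa [burgersH, hν] using hH
  exact hAB hB.symm

theorem burgersProfile_zero (hν : ν ≠ 0) (hA : A ≠ 0) :
    burgersProfile ν (2 * ν / A) 0 = A := by
  rw [burgersProfile]
  field_simp
  ring

theorem burgersProfile_of_burgersH_eq_zero (hν : ν ≠ 0) (hA : A ≠ 0)
    (hH : burgersH ν l A B = 0) : burgersProfile ν (2 * ν / A) l = B := by
  rw [burgersH] at hH
  have hpole : l * A - 2 * ν ≠ 0 := by
    intro h
    have : -2 * ν * A = 0 := by linear_combination hH + B * h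
    simp_all
  rw [burgersProfile, show l - 2 * ν / A = (l * A - 2 * ν) / A by field_simp,
    div_div_eq_mul_div, div_eq_iff hpole]
  linear_combination hH

theorem two_mul_div_notMem_Icc (hν : 0 < ν) (hAB : A < B) (hA : A ≠ 0)
    (hH : burgersH ν l A B = 0) : 2 * ν / A ∉ Icc 0 l := by
  rintro ⟨h₀, hₗ⟩
  rcases hA.lt_or_gt with hA | hA
  · exact (div_neg_of_pos_of_neg (by positivity) hA).not_ge h₀
  · have hlA : l * A < 2 * ν := by
      have hB : 0 < B := hA.trans hAB
      rw [burgersH] at hH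
      nlinarith
    exact hlA.not_ge ((div_le_iff₀ hA).1 hₗ)

end

/-- For `A < B` and `H = 2ν(B − A) − l·A·B`: there is some `x₀ ∉ [0, l]` such that
the stationary solution `u(x) = −2ν/(x − x₀)` satisfies `u(0) = A` and `u(l) = B`
if and only if `H = 0`. -/
theorem burgers_stationary_rational_form_iff
    (ν l A B H : ℝ) (hν : 0 < ν) (hl : 0 < l) (hAB : A < B)
    (hH : H = 2 * ν * (B - A) - l * A * B) :
    (∃ x₀ : ℝ, x₀ ∉ Set.Icc 0 l ∧
      (fun x : ℝ => -2 * ν / (x - x₀)) 0 = A ∧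
      (fun x : ℝ => -2 * ν / (x - x₀)) l = B) ↔ H = 0 := by
  subst hH
  constructor
  · rintro ⟨x₀, hx₀, hA, hB⟩
    have h₀ : x₀ ≠ 0 := by rintro rfl; exact hx₀ ⟨le_rfl, hl.le⟩
    have hₗ : x₀ ≠ l := by rintro rfl; exact hx₀ ⟨hl.le, le_rfl⟩
    exact burgersH_eq_zero_of_profile h₀ hₗ hA hB
  · intro hH
    have hA := ne_zero_of_burgersH_eq_zero hν.ne' hAB.ne hH
    exact ⟨2 * ν / A, two_mul_div_notMem_Icc hν hAB hA hH,
      burgersProfile_zero hν.ne' hA, burgersProfile_of_burgersH_eq_zero hν.ne' hA hH⟩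
end

section
/- Let ν > 0, l > 0, and A, B ∈ ℝ be arbitrary. Then there exists exactly one function u : [0, l] → ℝ that is twice continuously differentiable on [0, l], satisfies the stationary Burgers equation ν u''(x) = u(x) u'(x) for all x ∈ [0, l], and satisfies the Dirichlet boundary conditions u(0) = A and u(l) = B. -/
/-!
Since `ν u'' - u u' = (ν u' - u² / 2)'`, every solution satisfies `ν u' = u² / 2 + E` for a
constant `E`; in the variable `t = x / (2ν)` this is the Riccati equation `w' = w² + σ`, `σ = 2E`.

Existence. The Riccati equation is linearised by `w = N / D` with `N' = σ D`, `D' = -N`,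
`(N, D)(0) = (A, 1)`. The explicit `N`, `D` (trigonometric for `σ > 0`, hyperbolic for `σ < 0`)
depend continuously on `σ`, so the intermediate value theorem in `σ` reaches `B` as long as
`D > 0` on `[0, l / (2ν)]`. At `σ = -A²` the solution is constant; for `B ≤ A` one lets
`σ → -∞`; for `A < B` (reduced to `A < 0` by the symmetry `u ↦ -u (l - ·)`) one increases `σ`
until `√σ l / (2ν) = π / 2`. The remaining, larger values of `B` are reached by
`c tan (arctan (A / c) + c t)` with `c` chosen so that
`arctan (B / c) = arctan (A / c) + c l / (2ν)`: the phase then stays in `(-π / 2, π / 2)`.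

Uniqueness. If two solutions had constants `E > F`, their difference would vanish at both ends
yet have derivative `(E - F) / ν > 0` at each of its zeros, which is impossible. With equal
constants both solve the same first order equation, and Grönwall's inequality applies.
-/

/-- `u` is a (twice continuously differentiable) stationary solution of Burgers'
equation `ν u'' = u u'` on `[0, l]` with Dirichlet boundary values `u(0) = A`,
`u(l) = B`. -/
def IsStationaryBurgersSolution (ν l A B : ℝ) (u : ℝ → ℝ) : Prop :=
  ∃ u' u'' : ℝ → ℝ,
    (∀ x ∈ Set.Icc 0 l, HasDerivAt u (u' x) x) ∧
    (∀ x ∈ Set.Icc 0 l, HasDerivAt u' (u'' x) x) ∧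
    ContinuousOn u'' (Set.Icc 0 l) ∧
    (∀ x ∈ Set.Icc 0 l, ν * u'' x = u x * u' x) ∧
    u 0 = A ∧ u l = B

open Real Set Filter Topology

theorem Differentiable.continuous_dslope {𝕜 E : Type*} [NontriviallyNormedField 𝕜]
    [NormedAddCommGroup E] [NormedSpace 𝕜 E] {f : 𝕜 → E} (hf : Differentiable 𝕜 f) (a : 𝕜) :
    Continuous (dslope f a) := by
  refine continuous_iff_continuousAt.2 fun x => ?_
  rcases eq_or_ne x a with rfl | hx
  · exact continuousAt_dslope_same.2 (hf x)
  · exact (continuousAt_dslope_of_ne hx).2 (hf x).continuousAt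

theorem Real.cosh_le_two_mul_sinh {y : ℝ} (hy : 1 ≤ y) : cosh y ≤ 2 * sinh y := by
  have h3 : 3 ≤ exp y * exp y := by rw [← exp_add]; linarith [add_one_le_exp (y + y)]
  have h1 : exp y * exp (-y) = 1 := by rw [← exp_add, add_neg_cancel, exp_zero]
  rw [cosh_eq, sinh_eq]
  nlinarith [exp_pos y, exp_pos (-y)]

theorem hasDerivAt_div_of_linear_system {N D : ℝ → ℝ} {σ t : ℝ}
    (hN : HasDerivAt N (σ * D t) t) (hD : HasDerivAt D (-N t) t) (hD0 : D t ≠ 0) :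
    HasDerivAt (fun s => N s / D s) ((N t / D t) ^ 2 + σ) t :=
  (hN.div hD hD0).congr_deriv (by field_simp; ring)

theorem nonneg_of_deriv_pos_at_zeros {w w' : ℝ → ℝ} {a b : ℝ}
    (hw : ∀ x ∈ Icc a b, HasDerivAt w (w' x) x) (hpos : ∀ x ∈ Icc a b, w x = 0 → 0 < w' x)
    (ha : w a = 0) : ∀ x ∈ Icc a b, 0 ≤ w x := by
  intro x hx
  have := image_le_of_deriv_right_lt_deriv_boundary' (f := fun x => -w x) (f' := fun x => -w' x)
    (B := fun _ => 0) (B' := fun _ => 0)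
    (fun x hx => (hw x hx).continuousAt.continuousWithinAt.neg)
    (fun x hx => (hw x (Ico_subset_Icc_self hx)).neg.hasDerivWithinAt) (by simp [ha])
    continuousOn_const (fun x _ => hasDerivWithinAt_const x _ 0)
    (fun x hx hx0 => neg_neg_iff_pos.2 (hpos x (Ico_subset_Icc_self hx) (neg_eq_zero.1 hx0)))
    hx
  simpa using this

theorem false_of_deriv_pos_at_zeros {w w' : ℝ → ℝ} {a b : ℝ} (hab : a < b)
    (hw : ∀ x ∈ Icc a b, HasDerivAt w (w' x) x) (hpos : ∀ x ∈ Icc a b, w x = 0 → 0 < w' x)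
    (ha : w a = 0) (hb : w b = 0) : False := by
  have hrefl : ∀ x ∈ Icc a b, a + b - x ∈ Icc a b := fun x hx =>
    ⟨by linarith [hx.2], by linarith [hx.1]⟩
  have hle := nonneg_of_deriv_pos_at_zeros (w := fun x => -w (a + b - x))
    (w' := fun x => w' (a + b - x))
    (fun x hx => (((hw _ (hrefl x hx)).comp x
      ((hasDerivAt_id' x).const_sub (a + b))).neg).congr_deriv (by ring))
    (fun x hx h0 => hpos _ (hrefl x hx) (neg_eq_zero.1 h0)) (by simp [hb])
  have hzero : ∀ x ∈ Icc a b, w x = 0 := fun x hx => le_antisymm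
    (by simpa using hle _ (hrefl x hx)) (nonneg_of_deriv_pos_at_zeros hw hpos ha x hx)
  have hm : (a + b) / 2 ∈ Ioo a b := ⟨by linarith, by linarith⟩
  have hloc : w =ᶠ[𝓝 ((a + b) / 2)] fun _ => 0 :=
    eventually_of_mem (Ioo_mem_nhds hm.1 hm.2) fun x hx => hzero x (Ioo_subset_Icc_self hx)
  have h₀ := (hw _ (Ioo_subset_Icc_self hm)).unique
    ((hasDerivAt_const _ 0).congr_of_eventuallyEq hloc)
  linarith [hpos _ (Ioo_subset_Icc_self hm) hloc.eq_of_nhds]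

namespace IsStationaryBurgersSolution

variable {ν l A B : ℝ} {u : ℝ → ℝ}

theorem of_riccati {σ : ℝ} (hν : 0 < ν) {w : ℝ → ℝ}
    (hw : ∀ t ∈ Icc 0 (l / (2 * ν)), HasDerivAt w (w t ^ 2 + σ) t) :
    IsStationaryBurgersSolution ν l (w 0) (w (l / (2 * ν))) fun x => w (x / (2 * ν)) := by
  set u := fun x => w (x / (2 * ν))
  have hmem : ∀ x ∈ Icc 0 l, x / (2 * ν) ∈ Icc 0 (l / (2 * ν)) := fun x hx =>
    ⟨div_nonneg hx.1 (by positivity), div_le_div_of_nonneg_right hx.2 (by positivity)⟩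
  have hu : ∀ x ∈ Icc 0 l, HasDerivAt u ((u x ^ 2 + σ) / (2 * ν)) x := fun x hx =>
    ((hw _ (hmem x hx)).comp x ((hasDerivAt_id' x).div_const (2 * ν))).congr_deriv
      (by simp only [u]; ring)
  have hcont : ContinuousOn u (Icc 0 l) := fun x hx => (hu x hx).continuousAt.continuousWithinAt
  refine ⟨fun x => (u x ^ 2 + σ) / (2 * ν), fun x => u x * ((u x ^ 2 + σ) / (2 * ν)) / ν, hu,
    fun x hx => ?_, by fun_prop, fun x hx => by field_simp, by simp [u], rfl⟩
  exact ((((hu x hx).pow 2).add_const σ).div_const (2 * ν)).congr_deriv (by field_simp; ring)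

theorem reflect (h : IsStationaryBurgersSolution ν l (-B) (-A) u) :
    IsStationaryBurgersSolution ν l A B fun x => -u (l - x) := by
  obtain ⟨u', u'', hu', hu'', hcont, hode, h0, hl⟩ := h
  have hmem : ∀ x ∈ Icc 0 l, l - x ∈ Icc 0 l := fun x hx =>
    ⟨by linarith [hx.2], by linarith [hx.1]⟩
  have hrefl : ∀ x, HasDerivAt (fun y => l - y) (-1) x := fun x => (hasDerivAt_id' x).const_sub l
  refine ⟨fun x => u' (l - x), fun x => -u'' (l - x), fun x hx => ?_, fun x hx => ?_,
    (hcont.comp (by fun_prop) hmem).neg, fun x hx => ?_, by simp [hl], by simp [h0]⟩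
  · exact ((hu' _ (hmem x hx)).comp x (hrefl x)).neg.congr_deriv (by ring)
  · exact ((hu'' _ (hmem x hx)).comp x (hrefl x)).congr_deriv (by ring)
  · linear_combination -hode _ (hmem x hx)

theorem exists_first_integral (h : IsStationaryBurgersSolution ν l A B u) :
    ∃ u' : ℝ → ℝ, ∃ E : ℝ, (∀ x ∈ Icc 0 l, HasDerivAt u (u' x) x) ∧
      ∀ x ∈ Icc 0 l, ν * u' x = u x ^ 2 / 2 + E := by
  obtain ⟨u', u'', hu', hu'', -, hode, -, -⟩ := h
  refine ⟨u', ν * u' 0 - u 0 ^ 2 / 2, hu', fun x hx => ?_⟩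
  have hcont : ContinuousOn (fun x => ν * u' x - u x ^ 2 / 2) (Icc 0 l) := fun x hx =>
    (((hu'' x hx).continuousAt.const_mul ν).sub
      (((hu' x hx).continuousAt.pow 2).div_const 2)).continuousWithinAt
  have hderiv : ∀ x ∈ Ico 0 l,
      HasDerivWithinAt (fun x => ν * u' x - u x ^ 2 / 2) 0 (Ici x) x := fun x hx =>
    have hx := Ico_subset_Icc_self hx
    (((hu'' x hx).const_mul ν).sub (((hu' x hx).pow 2).div_const 2)).hasDerivWithinAt.congr_deriv
      (by simp only [Nat.cast_ofNat]; linear_combination hode x hx)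
  linarith [constant_of_has_deriv_right_zero hcont hderiv x hx]

end IsStationaryBurgersSolution

namespace Burgers

/- `genCos σ` and `genSin σ` solve `y'' = -σ y` with initial data `(1, 0)` and `(0, 1)`.
Writing `sin (√σ t) / √σ` as `t * dslope sin 0 (√σ t)` (and likewise for `sinh`) makes them
continuous in `σ` across `σ = 0`. -/
noncomputable def genCos (σ t : ℝ) : ℝ :=
  if 0 ≤ σ then cos (√σ * t) else cosh (√(-σ) * t)

noncomputable def genSin (σ t : ℝ) : ℝ :=
  if 0 ≤ σ then t * dslope sin 0 (√σ * t) else t * dslope sinh 0 (√(-σ) * t)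

variable {σ t A : ℝ}

theorem genCos_of_nonneg (hσ : 0 ≤ σ) (t : ℝ) : genCos σ t = cos (√σ * t) := if_pos hσ

theorem genCos_of_nonpos (hσ : σ ≤ 0) (t : ℝ) : genCos σ t = cosh (√(-σ) * t) := by
  rcases hσ.lt_or_eq with h | rfl
  · exact if_neg h.not_ge
  · simp [genCos]

theorem sqrt_mul_genSin_of_nonneg (hσ : 0 ≤ σ) (t : ℝ) : √σ * genSin σ t = sin (√σ * t) := by
  simpa [genSin, hσ, mul_assoc] using sub_smul_dslope sin 0 (√σ * t)

theorem sqrt_mul_genSin_of_nonpos (hσ : σ ≤ 0) (t : ℝ) :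
    √(-σ) * genSin σ t = sinh (√(-σ) * t) := by
  rcases hσ.lt_or_eq with h | rfl
  · simpa [genSin, h.not_ge, mul_assoc] using sub_smul_dslope sinh 0 (√(-σ) * t)
  · simp

theorem genSin_zero_left (t : ℝ) : genSin 0 t = t := by
  simp [genSin, dslope_same]

theorem genCos_zero_right (σ : ℝ) : genCos σ 0 = 1 := by simp [genCos]

theorem genSin_zero_right (σ : ℝ) : genSin σ 0 = 0 := by simp [genSin]

theorem genSin_eq_of_pos (hσ : 0 < σ) : genSin σ = fun t => sin (√σ * t) / √σ := by
  ext t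
  rw [← sqrt_mul_genSin_of_nonneg hσ.le, mul_div_cancel_left₀ _ (sqrt_pos.2 hσ).ne']

theorem genSin_eq_of_neg (hσ : σ < 0) : genSin σ = fun t => sinh (√(-σ) * t) / √(-σ) := by
  ext t
  rw [← sqrt_mul_genSin_of_nonpos hσ.le,
    mul_div_cancel_left₀ _ (sqrt_pos.2 (neg_pos.2 hσ)).ne']

theorem hasDerivAt_genCos (σ t : ℝ) : HasDerivAt (genCos σ) (-σ * genSin σ t) t := by
  rcases le_total 0 σ with hσ | hσ
  · have h := ((hasDerivAt_id' t).const_mul √σ).cos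
    rw [funext (genCos_of_nonneg hσ)]
    convert h using 1
    rw [← sqrt_mul_genSin_of_nonneg hσ]
    linear_combination (genSin σ t) * mul_self_sqrt hσ
  · have h := ((hasDerivAt_id' t).const_mul √(-σ)).cosh
    rw [funext (genCos_of_nonpos hσ)]
    convert h using 1
    rw [← sqrt_mul_genSin_of_nonpos hσ]
    linear_combination (-genSin σ t) * mul_self_sqrt (neg_nonneg.2 hσ)

theorem hasDerivAt_genSin (σ t : ℝ) : HasDerivAt (genSin σ) (genCos σ t) t := by
  rcases lt_trichotomy σ 0 with hσ | rfl | hσ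
  · have hc := (sqrt_pos.2 (neg_pos.2 hσ)).ne'
    rw [genSin_eq_of_neg hσ, genCos_of_nonpos hσ.le]
    exact ((((hasDerivAt_id' t).const_mul _).sinh).div_const _).congr_deriv (by field_simp)
  · simpa [funext genSin_zero_left, genCos_of_nonneg le_rfl] using hasDerivAt_id' t
  · have hc := (sqrt_pos.2 hσ).ne'
    rw [genSin_eq_of_pos hσ, genCos_of_nonneg hσ.le]
    exact ((((hasDerivAt_id' t).const_mul _).sin).div_const _).congr_deriv (by field_simp)

theorem continuous_genCos_left (t : ℝ) : Continuous fun σ => genCos σ t :=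
  Continuous.if_le (by fun_prop) (by fun_prop) continuous_const continuous_id
    fun σ hσ => by simp [← hσ]

theorem continuous_genSin_left (t : ℝ) : Continuous fun σ => genSin σ t :=
  Continuous.if_le
    (continuous_const.mul ((differentiable_sin.continuous_dslope 0).comp (by fun_prop)))
    (continuous_const.mul ((differentiable_sinh.continuous_dslope 0).comp (by fun_prop)))
    continuous_const continuous_id
    fun σ hσ => by simp [← hσ, dslope_same]

theorem genSin_pos (ht : 0 < t) (h : σ * t ^ 2 < π ^ 2) : 0 < genSin σ t := by
  rcases lt_trichotomy σ 0 with hσ | rfl | hσ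
  · rw [genSin_eq_of_neg hσ]
    have hc := sqrt_pos.2 (neg_pos.2 hσ)
    exact div_pos (sinh_pos_iff.2 (mul_pos hc ht)) hc
  · rwa [genSin_zero_left]
  · rw [genSin_eq_of_pos hσ]
    have hc := sqrt_pos.2 hσ
    refine div_pos (sin_pos_of_pos_of_lt_pi (mul_pos hc ht) ?_) hc
    have : (√σ * t) ^ 2 < π ^ 2 := by rwa [mul_pow, sq_sqrt hσ.le]
    exact abs_lt_of_sq_lt_sq' this pi_pos.le |>.2

theorem genCos_nonneg (h : σ * t ^ 2 ≤ (π / 2) ^ 2) : 0 ≤ genCos σ t := by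
  rcases le_total σ 0 with hσ | hσ
  · rw [genCos_of_nonpos hσ]
    exact (cosh_pos _).le
  · rw [genCos_of_nonneg hσ]
    have : (√σ * t) ^ 2 ≤ (π / 2) ^ 2 := by rwa [mul_pow, sq_sqrt hσ]
    exact cos_nonneg_of_mem_Icc (abs_le_of_sq_le_sq' this (by positivity))

theorem genSin_nonneg (ht : 0 ≤ t) (h : σ * t ^ 2 < π ^ 2) : 0 ≤ genSin σ t := by
  rcases ht.eq_or_lt with rfl | ht
  · rw [genSin_zero_right]
  · exact (genSin_pos ht h).le

noncomputable def riccatiDen (A σ t : ℝ) : ℝ := genCos σ t - A * genSin σ t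

noncomputable def riccatiSol (A σ t : ℝ) : ℝ :=
  (A * genCos σ t + σ * genSin σ t) / riccatiDen A σ t

theorem hasDerivAt_riccatiSol (h : riccatiDen A σ t ≠ 0) :
    HasDerivAt (riccatiSol A σ) (riccatiSol A σ t ^ 2 + σ) t := by
  refine hasDerivAt_div_of_linear_system (N := fun t => A * genCos σ t + σ * genSin σ t)
    (D := riccatiDen A σ) ?_ ?_ h
  · exact (((hasDerivAt_genCos σ t).const_mul A).add
      ((hasDerivAt_genSin σ t).const_mul σ)).congr_deriv (by unfold riccatiDen; ring)
  · exact ((hasDerivAt_genCos σ t).sub ((hasDerivAt_genSin σ t).const_mul A)).congr_deriv (by ring)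

theorem riccatiSol_zero_right (A σ : ℝ) : riccatiSol A σ 0 = A := by
  simp [riccatiSol, riccatiDen, genCos_zero_right, genSin_zero_right]

theorem continuousAt_riccatiSol_left (h : riccatiDen A σ t ≠ 0) :
    ContinuousAt (fun σ => riccatiSol A σ t) σ := by
  have hC := (continuous_genCos_left t).continuousAt (x := σ)
  have hS := (continuous_genSin_left t).continuousAt (x := σ)
  exact ((continuousAt_const.mul hC).add (continuousAt_id.mul hS)).div
    (hC.sub (continuousAt_const.mul hS)) h

theorem riccatiDen_pos_of_nonpos (hσ : σ ≤ 0) (hA : A ≤ √(-σ)) (ht : 0 ≤ t) :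
    0 < riccatiDen A σ t := by
  have hS : 0 ≤ genSin σ t := genSin_nonneg ht (by nlinarith [sq_nonneg t, pi_pos])
  calc 0 < exp (-(√(-σ) * t)) := exp_pos _
    _ = genCos σ t - √(-σ) * genSin σ t := by
      rw [genCos_of_nonpos hσ, sqrt_mul_genSin_of_nonpos hσ, cosh_sub_sinh]
    _ ≤ riccatiDen A σ t := by
      unfold riccatiDen
      nlinarith [mul_le_mul_of_nonneg_right hA hS]

theorem riccatiDen_pos_of_neg (hA : A < 0) (ht : 0 ≤ t) (h : σ * t ^ 2 ≤ (π / 2) ^ 2) :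
    0 < riccatiDen A σ t := by
  rcases ht.eq_or_lt with rfl | ht
  · simp [riccatiDen, genCos_zero_right, genSin_zero_right]
  · have hS := genSin_pos ht (h.trans_lt (by nlinarith [pi_pos]))
    have hC := genCos_nonneg h
    unfold riccatiDen
    nlinarith

theorem riccatiSol_neg_sq_self (h : riccatiDen A (-A ^ 2) t ≠ 0) :
    riccatiSol A (-A ^ 2) t = A := by
  rw [riccatiSol, div_eq_iff h, riccatiDen]
  ring

theorem riccatiSol_of_sqrt_mul_eq_pi_div_two (hσ : 0 ≤ σ) (h : √σ * t = π / 2) (hA : A ≠ 0) :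
    riccatiSol A σ t = -σ / A := by
  have hS : √σ * genSin σ t = 1 := by rw [sqrt_mul_genSin_of_nonneg hσ, h, sin_pi_div_two]
  have hS0 : genSin σ t ≠ 0 := right_ne_zero_of_mul_eq_one hS
  rw [riccatiSol, riccatiDen, genCos_of_nonneg hσ, h, cos_pi_div_two]
  field_simp
  ring

theorem riccatiSol_neg_sq_le {B c : ℝ} (hBA : B ≤ A) (hcAB : 2 * (A - B) + |A| + |B| ≤ c)
    (hct : 1 ≤ c * t) : riccatiSol A (-c ^ 2) t ≤ B := by
  have hc0 : 0 ≤ c := by linarith [abs_nonneg A, abs_nonneg B]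
  have hc : 0 < c := lt_of_le_of_ne hc0 (by rintro rfl; simp at hct; linarith)
  have hσ : -c ^ 2 ≤ 0 := neg_nonpos.2 (sq_nonneg c)
  have hsq : √(-(-c ^ 2)) = c := by rw [neg_neg, sqrt_sq hc0]
  have hD := riccatiDen_pos_of_nonpos (A := A) (t := t) hσ
    (by rw [hsq]; linarith [le_abs_self A, abs_nonneg B]) (by nlinarith)
  have hC : genCos (-c ^ 2) t = cosh (c * t) := by rw [genCos_of_nonpos hσ, hsq]
  have hS : c * genSin (-c ^ 2) t = sinh (c * t) := by
    simpa only [hsq] using sqrt_mul_genSin_of_nonpos hσ t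
  have hAB : A * B ≤ c ^ 2 - 2 * c * (A - B) := by
    nlinarith [abs_mul_abs_self A, abs_mul_abs_self B, neg_abs_le (A * B), abs_mul A B,
      abs_nonneg A, abs_nonneg B]
  have key : c * ((A - B) * cosh (c * t)) ≤ c * ((c ^ 2 - A * B) * genSin (-c ^ 2) t) :=
    calc c * ((A - B) * cosh (c * t)) ≤ 2 * c * (A - B) * sinh (c * t) := by
          nlinarith [mul_le_mul_of_nonneg_left (cosh_le_two_mul_sinh hct)
            (mul_nonneg hc0 (sub_nonneg.2 hBA))]
      _ ≤ (c ^ 2 - A * B) * sinh (c * t) :=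
          mul_le_mul_of_nonneg_right (by linarith) (sinh_pos_iff.2 (by linarith)).le
      _ = c * ((c ^ 2 - A * B) * genSin (-c ^ 2) t) := by rw [← hS]; ring
  rw [riccatiSol, div_le_iff₀ hD, riccatiDen, hC]
  nlinarith [le_of_mul_le_mul_left key hc]

variable {ν l B : ℝ}

theorem exists_solution_of_shooting (hν : 0 < ν) (hl : 0 ≤ l) {σ₁ σ₂ : ℝ}
    (hden : ∀ σ ∈ uIcc σ₁ σ₂, ∀ t ∈ Icc 0 (l / (2 * ν)), 0 < riccatiDen A σ t)
    (hB : B ∈ uIcc (riccatiSol A σ₁ (l / (2 * ν))) (riccatiSol A σ₂ (l / (2 * ν)))) :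
    ∃ u, IsStationaryBurgersSolution ν l A B u := by
  have hL : l / (2 * ν) ∈ Icc 0 (l / (2 * ν)) := ⟨by positivity, le_rfl⟩
  obtain ⟨σ, hσ, rfl⟩ := intermediate_value_uIcc
    (fun σ hσ => (continuousAt_riccatiSol_left (hden σ hσ _ hL).ne').continuousWithinAt) hB
  have h := IsStationaryBurgersSolution.of_riccati hν fun t ht =>
    hasDerivAt_riccatiSol (hden σ hσ t ht).ne'
  rw [riccatiSol_zero_right] at h
  exact ⟨_, h⟩

theorem exists_solution_of_arctan_eq (hν : 0 < ν) {c : ℝ} (hc : 0 < c)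
    (h : arctan (B / c) = arctan (A / c) + c * (l / (2 * ν))) :
    ∃ u, IsStationaryBurgersSolution ν l A B u := by
  set θ : ℝ → ℝ := fun t => arctan (A / c) + c * t
  have hcos : ∀ t ∈ Icc 0 (l / (2 * ν)), cos (θ t) ≠ 0 := fun t ht =>
    (cos_pos_of_mem_Ioo ⟨by nlinarith [neg_pi_div_two_lt_arctan (A / c), ht.1],
      by nlinarith [arctan_lt_pi_div_two (B / c), ht.2]⟩).ne'
  have hw : ∀ t ∈ Icc 0 (l / (2 * ν)),
      HasDerivAt (fun t => c * tan (θ t)) ((c * tan (θ t)) ^ 2 + c ^ 2) t := by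
    intro t ht
    have hθ := ((hasDerivAt_id' t).const_mul c).const_add (arctan (A / c))
    refine (((hasDerivAt_tan (hcos t ht)).comp t hθ).const_mul c).congr_deriv ?_
    have hθ0 := hcos t ht
    rw [tan_eq_sin_div_cos]
    field_simp
    exact (sin_sq_add_cos_sq _).symm
  have hsol := IsStationaryBurgersSolution.of_riccati hν hw
  simp only [θ, mul_zero, add_zero, ← h, tan_arctan] at hsol
  field_simp at hsol
  exact ⟨_, hsol⟩

theorem exists_pos_arctan_eq {L : ℝ} (hL : 0 < L) (hA : A < 0)
    (hB : -(π / (2 * L)) ^ 2 / A < B) :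
    ∃ c, 0 < c ∧ arctan (B / c) = arctan (A / c) + c * L := by
  set c₁ := π / (2 * L)
  have hc₁ : 0 < c₁ := by positivity
  have hK : ContinuousOn (fun c => arctan (B / c) - arctan (A / c) - c * L) (Icc c₁ (2 * c₁)) :=
    fun c hc => by
      have : c ≠ 0 := (hc₁.trans_le hc.1).ne'
      fun_prop (disch := assumption)
  have h₁ : 0 < arctan (B / c₁) - arctan (A / c₁) - c₁ * L := by
    have hA' : arctan (A / c₁) = arctan (c₁ / -A) - π / 2 := by
      rw [show A / c₁ = -(c₁ / -A)⁻¹ by field_simp, arctan_neg,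
        arctan_inv_of_pos (div_pos hc₁ (neg_pos.2 hA))]
      ring
    have hcL : c₁ * L = π / 2 := by simp only [c₁]; field_simp
    have hlt : c₁ / -A < B / c₁ := by
      rw [div_lt_iff_of_neg hA] at hB
      rw [div_lt_div_iff₀ (neg_pos.2 hA) hc₁]
      nlinarith
    linarith [arctan_strictMono hlt]
  have h₂ : arctan (B / (2 * c₁)) - arctan (A / (2 * c₁)) - 2 * c₁ * L < 0 := by
    have hcL : 2 * c₁ * L = π := by simp only [c₁]; field_simp
    linarith [arctan_lt_pi_div_two (B / (2 * c₁)), neg_pi_div_two_lt_arctan (A / (2 * c₁))]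
  obtain ⟨c, hc, hKc⟩ := intermediate_value_Icc' (by linarith) hK ⟨h₂.le, h₁.le⟩
  exact ⟨c, hc₁.trans_le hc.1, by linarith [hKc]⟩

theorem exists_solution_of_le (hν : 0 < ν) (hl : 0 < l) (hBA : B ≤ A) :
    ∃ u, IsStationaryBurgersSolution ν l A B u := by
  set L := l / (2 * ν)
  have hL : 0 < L := by positivity
  set c := 2 * (A - B) + |A| + |B| + L⁻¹
  have hcA : |A| ≤ c := by linarith [abs_nonneg B, inv_pos.2 hL]
  have hcL : 1 ≤ c * L := by
    rw [← inv_mul_cancel₀ hL.ne']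
    exact mul_le_mul_of_nonneg_right (by linarith [abs_nonneg A, abs_nonneg B]) hL.le
  have hden : ∀ σ, σ ≤ -A ^ 2 → ∀ t ∈ Icc 0 L, 0 < riccatiDen A σ t := fun σ hσ t ht =>
    riccatiDen_pos_of_nonpos (hσ.trans (by nlinarith)) ((le_abs_self A).trans
      (by rw [← sqrt_sq_eq_abs]; exact sqrt_le_sqrt (by linarith))) ht.1
  have hcA' : -c ^ 2 ≤ -A ^ 2 := by nlinarith [abs_nonneg A, sq_abs A]
  refine exists_solution_of_shooting hν hl.le (σ₁ := -c ^ 2) (σ₂ := -A ^ 2)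
    (fun σ hσ => hden σ (by rw [uIcc_of_le hcA'] at hσ; exact hσ.2)) ?_
  rw [riccatiSol_neg_sq_self (hden _ le_rfl L ⟨hL.le, le_rfl⟩).ne']
  exact mem_uIcc.2 (Or.inl ⟨riccatiSol_neg_sq_le hBA (by linarith [inv_pos.2 hL]) hcL, hBA⟩)

theorem exists_solution_of_neg_of_lt (hν : 0 < ν) (hl : 0 < l) (hA : A < 0) (hAB : A < B) :
    ∃ u, IsStationaryBurgersSolution ν l A B u := by
  set L := l / (2 * ν)
  have hL : 0 < L := by positivity
  set σ₁ := (π / (2 * L)) ^ 2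
  by_cases hB : B ≤ -σ₁ / A
  · have hσ₁ : -A ^ 2 ≤ σ₁ := by nlinarith [sq_nonneg A, sq_nonneg (π / (2 * L))]
    have hden : ∀ σ ∈ uIcc (-A ^ 2) σ₁, ∀ t ∈ Icc 0 L, 0 < riccatiDen A σ t := by
      intro σ hσ t ht
      rw [uIcc_of_le hσ₁] at hσ
      refine riccatiDen_pos_of_neg hA ht.1 ?_
      rcases le_total σ 0 with h | h
      · nlinarith [sq_nonneg t, pi_pos]
      · calc σ * t ^ 2 ≤ σ₁ * L ^ 2 := mul_le_mul hσ.2 (pow_le_pow_left₀ ht.1 ht.2 2)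
              (sq_nonneg t) (by positivity)
          _ = (π / 2) ^ 2 := by simp only [σ₁]; field_simp
    refine exists_solution_of_shooting hν hl.le hden ?_
    rw [riccatiSol_neg_sq_self (hden _ left_mem_uIcc L ⟨hL.le, le_rfl⟩).ne',
      riccatiSol_of_sqrt_mul_eq_pi_div_two (sq_nonneg _) ?_ hA.ne]
    · exact mem_uIcc.2 (Or.inl ⟨hAB.le, hB⟩)
    · rw [sqrt_sq (by positivity), div_mul_eq_mul_div, mul_div_mul_right _ _ hL.ne']
  · obtain ⟨c, hc, h⟩ := exists_pos_arctan_eq hL hA (not_le.1 hB)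
    exact exists_solution_of_arctan_eq hν hc h

theorem exists_isStationaryBurgersSolution (hν : 0 < ν) (hl : 0 < l) :
    ∃ u, IsStationaryBurgersSolution ν l A B u := by
  rcases le_or_gt B A with hBA | hAB
  · exact exists_solution_of_le hν hl hBA
  rcases lt_or_ge A 0 with hA | hA
  · exact exists_solution_of_neg_of_lt hν hl hA hAB
  · obtain ⟨u, hu⟩ := exists_solution_of_neg_of_lt (A := -B) (B := -A) hν hl (by linarith)
      (by linarith)
    exact ⟨_, hu.reflect⟩

section FirstIntegral

variable {E F : ℝ} {u v u' v' : ℝ → ℝ}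

theorem first_integral_le (hν : 0 < ν) (hl : 0 < l)
    (hu : ∀ x ∈ Icc 0 l, HasDerivAt u (u' x) x) (hv : ∀ x ∈ Icc 0 l, HasDerivAt v (v' x) x)
    (hE : ∀ x ∈ Icc 0 l, ν * u' x = u x ^ 2 / 2 + E)
    (hF : ∀ x ∈ Icc 0 l, ν * v' x = v x ^ 2 / 2 + F) (h0 : u 0 = v 0) (hl' : u l = v l) :
    E ≤ F := by
  by_contra! hFE
  refine false_of_deriv_pos_at_zeros hl (w := fun x => u x - v x) (w' := fun x => u' x - v' x)
    (fun x hx => (hu x hx).sub (hv x hx)) (fun x hx hx0 => ?_) (by simp [h0]) (by simp [hl'])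
  have huv : u x = v x := sub_eq_zero.1 hx0
  have hjump : ν * (u' x - v' x) = E - F := by
    linear_combination hE x hx - hF x hx + (u x + v x) / 2 * huv
  nlinarith

theorem eqOn_of_first_integral (hν : ν ≠ 0)
    (hu : ∀ x ∈ Icc 0 l, HasDerivAt u (u' x) x) (hv : ∀ x ∈ Icc 0 l, HasDerivAt v (v' x) x)
    (hE : ∀ x ∈ Icc 0 l, ν * u' x = u x ^ 2 / 2 + E)
    (hF : ∀ x ∈ Icc 0 l, ν * v' x = v x ^ 2 / 2 + E) (h0 : u 0 = v 0) :
    ∀ x ∈ Icc 0 l, u x = v x := by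
  have hcu : ContinuousOn u (Icc 0 l) := fun x hx => (hu x hx).continuousAt.continuousWithinAt
  have hcv : ContinuousOn v (Icc 0 l) := fun x hx => (hv x hx).continuousAt.continuousWithinAt
  obtain ⟨K, hK⟩ := isCompact_Icc.exists_bound_of_continuousOn
    ((hcu.add hcv).div_const (2 * ν))
  have hw := eq_zero_of_abs_deriv_le_mul_abs_self_of_eq_zero_right (K := K)
    (f := fun x => u x - v x) (f' := fun x => u' x - v' x) (hcu.sub hcv)
    (fun x hx => ((hu x (Ico_subset_Icc_self hx)).sub
      (hv x (Ico_subset_Icc_self hx))).hasDerivWithinAt)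
    (sub_eq_zero.2 h0) fun x hx => by
      have hx := Ico_subset_Icc_self hx
      have hlin : u' x - v' x = (u x + v x) / (2 * ν) * (u x - v x) := by
        field_simp
        linear_combination 2 * hE x hx - 2 * hF x hx
      rw [hlin, norm_mul]
      exact mul_le_mul_of_nonneg_right (hK x hx) (norm_nonneg _)
  exact fun x hx => sub_eq_zero.1 (hw x hx)

end FirstIntegral

end Burgers

theorem IsStationaryBurgersSolution.eqOn {ν l A B : ℝ} {u v : ℝ → ℝ} (hν : 0 < ν) (hl : 0 < l)
    (hu : IsStationaryBurgersSolution ν l A B u) (hv : IsStationaryBurgersSolution ν l A B v) :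
    ∀ x ∈ Icc 0 l, u x = v x := by
  obtain ⟨u', E, hu', hE⟩ := hu.exists_first_integral
  obtain ⟨v', F, hv', hF⟩ := hv.exists_first_integral
  obtain ⟨-, -, -, -, -, -, hu0, hul⟩ := hu
  obtain ⟨-, -, -, -, -, -, hv0, hvl⟩ := hv
  have h0 : u 0 = v 0 := hu0.trans hv0.symm
  have hl' : u l = v l := hul.trans hvl.symm
  have hEF : E = F := le_antisymm (Burgers.first_integral_le hν hl hu' hv' hE hF h0 hl')
    (Burgers.first_integral_le hν hl hv' hu' hF hE h0.symm hl'.symm)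
  exact Burgers.eqOn_of_first_integral hν.ne' hu' hv' hE (hEF ▸ hF) h0

/-- For every `ν > 0`, `l > 0` and all `A B : ℝ`, the stationary problem for Burgers'
equation with Dirichlet boundary conditions has exactly one solution on `[0, l]`. -/
theorem burgers_stationary_existence_uniqueness
    (ν l A B : ℝ) (hν : 0 < ν) (hl : 0 < l) :
    (∃ u : ℝ → ℝ, IsStationaryBurgersSolution ν l A B u) ∧
    (∀ u v : ℝ → ℝ, IsStationaryBurgersSolution ν l A B u →
      IsStationaryBurgersSolution ν l A B v → ∀ x ∈ Set.Icc 0 l, u x = v x) :=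
  ⟨Burgers.exists_isStationaryBurgersSolution hν hl, fun _ _ hu hv => hu.eqOn hν hl hv⟩
end

section
/- Let ν > 0, l > 0, A, B ∈ ℝ with A ≠ B, and let k > 0 and x₀ ∈ ℝ with x₀ ≠ 0 and x₀ ≠ l. Suppose the function X(x) = sinh(k(x − x₀)) satisfies the Robin boundary conditions X'(0) + (A/(2ν)) X(0) = 0 and X'(l) + (B/(2ν)) X(l) = 0. Then ξ := kl satisfies the transcendental equation coth ξ = p/ξ − q ξ, where p = l·A·B/(2ν(B − A)) and q = 2ν/(l(B − A)). -/
/-! Write `μ = 2νk`, `a = k x₀` and `b = k (l − x₀)`, so that `a + b = kl`. The Robin conditions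
become `μ cosh a = A sinh a` and `μ cosh b = −B sinh b`. By the addition formulas both
`μ² cosh (a + b) = (μ² − AB) sinh a sinh b` and `μ sinh (a + b) = (A − B) sinh a sinh b`;
eliminating `sinh a sinh b` gives `coth (kl) = (AB − μ²) / (μ (B − A))`, which is the
transcendental equation. -/

noncomputable def Real.coth (x : ℝ) : ℝ := Real.cosh x / Real.sinh x

namespace Real

theorem hasDerivAt_sinh_mul_sub (k x₀ x : ℝ) :
    HasDerivAt (fun x => sinh (k * (x - x₀))) (k * cosh (k * (x - x₀))) x := by
  have hinner : HasDerivAt (fun x => k * (x - x₀)) k x := by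
    simpa using ((hasDerivAt_id x).sub_const x₀).const_mul k
  simpa only [mul_comm] using hinner.sinh

theorem two_mul_mul_cosh_eq_of_robin {ν k C y : ℝ} (hν : ν ≠ 0)
    (h : k * cosh y + C / (2 * ν) * sinh y = 0) :
    2 * ν * k * cosh y = -C * sinh y := by
  field_simp at h
  linarith

theorem mul_sub_mul_cosh_add_eq_of_robin {μ A B a b : ℝ} (hμ : μ ≠ 0)
    (ha : μ * cosh a = A * sinh a) (hb : μ * cosh b = -B * sinh b) :
    μ * (B - A) * cosh (a + b) = (A * B - μ ^ 2) * sinh (a + b) := by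
  have hcosh : μ ^ 2 * cosh (a + b) = (μ ^ 2 - A * B) * (sinh a * sinh b) := by
    rw [cosh_add]
    linear_combination (μ * cosh b) * ha + (A * sinh a) * hb
  have hsinh : μ * sinh (a + b) = (A - B) * (sinh a * sinh b) := by
    rw [sinh_add]
    linear_combination sinh a * hb + sinh b * ha
  refine mul_left_cancel₀ hμ ?_
  linear_combination (B - A) * hcosh - (A * B - μ ^ 2) * hsinh

theorem coth_add_eq_of_robin {μ A B a b : ℝ} (hμ : μ ≠ 0) (hAB : A ≠ B)
    (hab : sinh (a + b) ≠ 0) (ha : μ * cosh a = A * sinh a) (hb : μ * cosh b = -B * sinh b) :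
    coth (a + b) = (A * B - μ ^ 2) / (μ * (B - A)) := by
  have hBA : μ * (B - A) ≠ 0 := mul_ne_zero hμ (sub_ne_zero.mpr hAB.symm)
  rw [coth, div_eq_div_iff hab hBA]
  linear_combination mul_sub_mul_cosh_add_eq_of_robin hμ ha hb

end Real

theorem robin_sinh_eigenfunction_transcendental_equation_general
    (ν l A B k x₀ : ℝ) (hν : 0 < ν) (hl : 0 < l) (hAB : A ≠ B) (hk : 0 < k)
    (X : ℝ → ℝ) (hX : X = fun x => Real.sinh (k * (x - x₀)))
    (hrobin0 : deriv X 0 + (A / (2 * ν)) * X 0 = 0)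
    (hrobinl : deriv X l + (B / (2 * ν)) * X l = 0) :
    Real.coth (k * l) =
      (l * A * B / (2 * ν * (B - A))) / (k * l)
        - (2 * ν / (l * (B - A))) * (k * l) := by
  subst hX
  simp only [(Real.hasDerivAt_sinh_mul_sub k x₀ _).deriv] at hrobin0 hrobinl
  have hcosh_a : 2 * ν * k * Real.cosh (k * x₀) = A * Real.sinh (k * x₀) := by
    have := Real.two_mul_mul_cosh_eq_of_robin hν.ne' hrobin0
    rwa [zero_sub, mul_neg, Real.cosh_neg, Real.sinh_neg, neg_mul_neg] at this
  have hcosh_b := Real.two_mul_mul_cosh_eq_of_robin hν.ne' hrobinl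
  have hkl : k * l = k * x₀ + k * (l - x₀) := by ring
  have hsinh : Real.sinh (k * x₀ + k * (l - x₀)) ≠ 0 := by
    rw [← hkl, Real.sinh_ne_zero]
    positivity
  rw [hkl, Real.coth_add_eq_of_robin (by positivity) hAB hsinh hcosh_a hcosh_b, ← hkl]
  field_simp

/-- If the eigenfunction `X(x) = sinh(k(x − x₀))` satisfies the Robin boundary
conditions `X'(0) + (A/(2ν)) X(0) = 0` and `X'(l) + (B/(2ν)) X(l) = 0` with
`A ≠ B`, `x₀ ≠ 0`, `x₀ ≠ l`, then `ξ = kl` satisfies the transcendental equation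
`coth ξ = p/ξ − q ξ` with `p = lAB/(2ν(B − A))` and `q = 2ν/(l(B − A))`. -/
theorem robin_sinh_eigenfunction_transcendental_equation
    (ν l A B k x₀ : ℝ) (hν : 0 < ν) (hl : 0 < l) (hAB : A ≠ B) (hk : 0 < k)
    (hx₀0 : x₀ ≠ 0) (hx₀l : x₀ ≠ l)
    (X : ℝ → ℝ) (hX : X = fun x => Real.sinh (k * (x - x₀)))
    (hrobin0 : deriv X 0 + (A / (2 * ν)) * X 0 = 0)
    (hrobinl : deriv X l + (B / (2 * ν)) * X l = 0) :
    Real.coth (k * l) =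
      (l * A * B / (2 * ν * (B - A))) / (k * l)
        - (2 * ν / (l * (B - A))) * (k * l) :=
  robin_sinh_eigenfunction_transcendental_equation_general ν l A B k x₀ hν hl hAB hk X hX hrobin0
    hrobinl
end

section
/- Let ν > 0, l > 0, A ∈ ℝ, and let k > 0 and x₀ ∈ ℝ. Suppose the function X(x) = sin(k(x − x₀)) satisfies the Robin boundary conditions X'(0) + (A/(2ν)) X(0) = 0 and X'(l) + (A/(2ν)) X(l) = 0 (equal boundary constants, corresponding to A = B). Then there exists a positive integer n such that k = πn/l. -/
open Real

/-! Both boundary conditions say that the unit vectors `(cos θ, sin θ)` at the phases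
`θ₀ = k (0 - x₀)` and `θ_l = k (l - x₀)` are orthogonal to `(k, A/(2ν))`, which is nonzero since
`k > 0`. Two such unit vectors are parallel, so `sin (θ_l - θ₀) = sin (k l) = 0`, and the positive
zeros of `sin` are the positive multiples of `π`. -/

theorem hasDerivAt_sin_mul_sub (k x₀ x : ℝ) :
    HasDerivAt (fun x => sin (k * (x - x₀))) (k * cos (k * (x - x₀))) x := by
  simpa [mul_comm] using (((hasDerivAt_id x).sub_const x₀).const_mul k).sin

theorem mul_sin_sub_eq_zero {k c a b : ℝ} (ha : k * cos a + c * sin a = 0)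
    (hb : k * cos b + c * sin b = 0) : k * sin (b - a) = 0 := by
  calc k * sin (b - a) = sin b * (k * cos a + c * sin a) - sin a * (k * cos b + c * sin b) := by
        rw [sin_sub]; ring
    _ = 0 := by rw [ha, hb]; ring

theorem exists_pos_nat_mul_pi_of_sin_eq_zero {x : ℝ} (hsin : sin x = 0) (hx : 0 < x) :
    ∃ n : ℕ, 0 < n ∧ x = n * π := by
  obtain ⟨m, rfl⟩ := sin_eq_zero_iff.mp hsin
  have hm : 0 < m := by exact_mod_cast pos_of_mul_pos_left hx pi_pos.le
  lift m to ℕ using hm.le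
  exact ⟨m, by exact_mod_cast hm, by push_cast; rfl⟩

theorem robin_equal_constants_sin_eigenvalues_general
    (ν l A k x₀ : ℝ) (hl : 0 < l) (hk : 0 < k)
    (X : ℝ → ℝ) (hX : X = fun x => Real.sin (k * (x - x₀)))
    (hrobin0 : deriv X 0 + (A / (2 * ν)) * X 0 = 0)
    (hrobinl : deriv X l + (A / (2 * ν)) * X l = 0) :
    ∃ n : ℕ, 0 < n ∧ k = Real.pi * n / l := by
  subst hX
  simp only [(hasDerivAt_sin_mul_sub k x₀ _).deriv] at hrobin0 hrobinl
  have hsin : sin (k * l) = 0 := by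
    have h := mul_sin_sub_eq_zero hrobin0 hrobinl
    rw [show k * (l - x₀) - k * (0 - x₀) = k * l by ring] at h
    exact (mul_eq_zero.mp h).resolve_left hk.ne'
  obtain ⟨n, hn, hkl⟩ := exists_pos_nat_mul_pi_of_sin_eq_zero hsin (mul_pos hk hl)
  refine ⟨n, hn, ?_⟩
  rw [eq_div_iff hl.ne', hkl, mul_comm]

/-- In the exceptional case of equal Robin boundary constants (`A = B`), the
eigenfunction `X(x) = sin(k(x − x₀))` forces `k = πn/l` for some positive
integer `n`. -/
theorem robin_equal_constants_sin_eigenvalues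
    (ν l A k x₀ : ℝ) (hν : 0 < ν) (hl : 0 < l) (hk : 0 < k)
    (X : ℝ → ℝ) (hX : X = fun x => Real.sin (k * (x - x₀)))
    (hrobin0 : deriv X 0 + (A / (2 * ν)) * X 0 = 0)
    (hrobinl : deriv X l + (A / (2 * ν)) * X l = 0) :
    ∃ n : ℕ, 0 < n ∧ k = Real.pi * n / l :=
  robin_equal_constants_sin_eigenvalues_general ν l A k x₀ hl hk X hX hrobin0 hrobinl
end

section
/- Let ν > 0, l > 0, A ∈ ℝ, and let X : ℝ → ℝ be twice continuously differentiable on [0, l] with X(x) ≠ 0 for all x ∈ [0, l]. Suppose −X''(x) = λ X(x) on [0, l] for some λ ∈ ℝ, and X satisfies the Robin boundary conditions X'(0) + (A/(2ν)) X(0) = 0 and X'(l) + (A/(2ν)) X(l) = 0. Then λ = −(A/(2ν))² and X(x) = X(0) · exp(−A x/(2ν)) for all x ∈ [0, l]. -/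
/-!
With `k = A/(2ν)`, the defect `Z = (X' + kX)·e^{-kx}` of the boundary operator vanishes at both
ends and satisfies `Z' = -(λ + k²)·X·e^{-kx}`. Rolle's theorem gives a zero of `Z'` inside `(0, l)`,
and since `X` does not vanish there, `λ + k² = 0`. Then `Z' ≡ 0`, so `Z ≡ 0`, i.e. `X' = -kX`,
whose solutions are `X(0)·e^{-kx}`.
-/

open Set Real

theorem eq_left_of_hasDerivAt_zero {f : ℝ → ℝ} {a b : ℝ}
    (hf : ∀ x ∈ Icc a b, HasDerivAt f 0 x) : ∀ x ∈ Icc a b, f x = f a :=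
  constant_of_has_deriv_right_zero (fun x hx => (hf x hx).continuousAt.continuousWithinAt)
    fun x hx => (hf x (Ico_subset_Icc_self hx)).hasDerivWithinAt

theorem eq_mul_exp_of_hasDerivAt_eq_mul {f : ℝ → ℝ} {a b c : ℝ}
    (hf : ∀ x ∈ Icc a b, HasDerivAt f (c * f x) x) :
    ∀ x ∈ Icc a b, f x = f a * exp (c * (x - a)) := by
  have hconst : ∀ x ∈ Icc a b, HasDerivAt (fun y => f y * exp (-c * (y - a))) 0 x := by
    intro x hx
    have hexp : HasDerivAt (fun y => exp (-c * (y - a))) (exp (-c * (x - a)) * -c) x := by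
      simpa using (((hasDerivAt_id x).sub_const a).const_mul (-c)).exp
    exact ((hf x hx).mul hexp).congr_deriv (by ring)
  intro x hx
  have h := eq_left_of_hasDerivAt_zero hconst x hx
  simp only [sub_self, mul_zero, exp_zero, mul_one] at h
  rw [← h, mul_assoc, ← exp_add]
  simp

theorem hasDerivAt_add_mul_mul_exp_neg_mul {f f' : ℝ → ℝ} {f'' k x : ℝ}
    (hf : HasDerivAt f (f' x) x) (hf' : HasDerivAt f' f'' x) :
    HasDerivAt (fun y => (f' y + k * f y) * exp (-k * y))
      ((f'' - k ^ 2 * f x) * exp (-k * x)) x := by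
  have hexp : HasDerivAt (fun y => exp (-k * y)) (exp (-k * x) * -k) x := by
    simpa using ((hasDerivAt_id x).const_mul (-k)).exp
  have hsum : HasDerivAt (fun y => f' y + k * f y) (f'' + k * f' x) x := hf'.add (hf.const_mul k)
  exact (hsum.mul hexp).congr_deriv (by ring)

theorem robin_equal_constants_ground_eigenfunction_general
    (ν l A lam : ℝ) (hl : 0 < l)
    (X X' X'' : ℝ → ℝ)
    (hder1 : ∀ x ∈ Set.Icc 0 l, HasDerivAt X (X' x) x)
    (hder2 : ∀ x ∈ Set.Icc 0 l, HasDerivAt X' (X'' x) x)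
    (hX0 : ∀ x ∈ Set.Icc 0 l, X x ≠ 0)
    (hode : ∀ x ∈ Set.Icc 0 l, -X'' x = lam * X x)
    (hrobin0 : X' 0 + (A / (2 * ν)) * X 0 = 0)
    (hrobinl : X' l + (A / (2 * ν)) * X l = 0) :
    lam = -(A / (2 * ν)) ^ 2 ∧
    ∀ x ∈ Set.Icc 0 l, X x = X 0 * Real.exp (-A * x / (2 * ν)) := by
  set k := A / (2 * ν) with hk
  set Z := fun y => (X' y + k * X y) * exp (-k * y)
  have hZ' : ∀ x ∈ Icc 0 l, HasDerivAt Z (-(lam + k ^ 2) * X x * exp (-k * x)) x := by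
    intro x hx
    convert hasDerivAt_add_mul_mul_exp_neg_mul (k := k) (hder1 x hx) (hder2 x hx) using 1
    linear_combination exp (-k * x) * hode x hx
  obtain ⟨c, hc, hZ'c⟩ := exists_hasDerivAt_eq_zero hl
    (fun x hx => (hZ' x hx).continuousAt.continuousWithinAt) (by simp [Z, hrobin0, hrobinl])
    fun x hx => hZ' x (Ioo_subset_Icc_self hx)
  have hμ : lam + k ^ 2 = 0 := neg_eq_zero.mp <|
    (mul_eq_zero.mp ((mul_eq_zero.mp hZ'c).resolve_right (exp_ne_zero _))).resolve_right
      (hX0 c (Ioo_subset_Icc_self hc))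
  have hZ : ∀ x ∈ Icc 0 l, Z x = 0 := fun x hx => by
    rw [eq_left_of_hasDerivAt_zero (f := Z) (fun y hy => by simpa [hμ] using hZ' y hy) x hx]
    simp [Z, hrobin0]
  have hX' : ∀ x ∈ Icc 0 l, HasDerivAt X (-k * X x) x := fun x hx => by
    convert hder1 x hx using 1
    linarith [(mul_eq_zero.mp (hZ x hx)).resolve_right (exp_ne_zero _)]
  refine ⟨by linarith, fun x hx => ?_⟩
  rw [eq_mul_exp_of_hasDerivAt_eq_mul hX' x hx, hk]
  ring_nf

/-- In the exceptional case of equal Robin boundary constants (`A = B`), a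
nonvanishing eigenfunction of `−X'' = λX` on `[0, l]` has eigenvalue
`λ = −(A/(2ν))²` and the form `X(x) = X(0)·exp(−Ax/(2ν))`. -/
theorem robin_equal_constants_ground_eigenfunction
    (ν l A lam : ℝ) (hν : 0 < ν) (hl : 0 < l)
    (X X' X'' : ℝ → ℝ)
    (hder1 : ∀ x ∈ Set.Icc 0 l, HasDerivAt X (X' x) x)
    (hder2 : ∀ x ∈ Set.Icc 0 l, HasDerivAt X' (X'' x) x)
    (hcont : ContinuousOn X'' (Set.Icc 0 l))
    (hX0 : ∀ x ∈ Set.Icc 0 l, X x ≠ 0)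
    (hode : ∀ x ∈ Set.Icc 0 l, -X'' x = lam * X x)
    (hrobin0 : X' 0 + (A / (2 * ν)) * X 0 = 0)
    (hrobinl : X' l + (A / (2 * ν)) * X l = 0) :
    lam = -(A / (2 * ν)) ^ 2 ∧
    ∀ x ∈ Set.Icc 0 l, X x = X 0 * Real.exp (-A * x / (2 * ν)) :=
  robin_equal_constants_ground_eigenfunction_general ν l A lam hl X X' X'' hder1 hder2 hX0 hode
    hrobin0 hrobinl
end

section
/- Let ν > 0, l > 0, λ₀ < λ₁ be real numbers, and m, M, U > 0. Let φˢ, φ̃ : [0, l] × [0, ∞) → ℝ be differentiable in x, set φ = φˢ + φ̃, and suppose for all x ∈ [0, l] and t ≥ 0: |φˢ(x, t)| ≥ m·exp(−ν λ₀ t), |φ̃(x, t)| ≤ M·exp(−ν λ₁ t), |∂_x φ̃(x, t)| ≤ M·exp(−ν λ₁ t), φ(x, t) ≠ 0, and |u(x, t)| ≤ U, where u = −2ν (∂_x φ)/φ and uˢ = −2ν (∂_x φˢ)/φˢ. Then for all x ∈ [0, l] and t ≥ 0: |u(x, t) − uˢ(x, t)| ≤ ((U + 2ν) M / m) · exp(−ν(λ₁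 − λ₀) t). In particular, sup_{x ∈ [0, l]} |u(x, t) − uˢ(x, t)| → 0 as t → ∞, i.e., the stationary solution is stable. -/
open Filter Topology

/-! Write `a = φˢ`, `b = φ̃` and `u = −2ν (a + b)ₓ / (a + b)`. Multiplying `u − uˢ` by `a` gives
`−(u b + 2ν bₓ)`, so the bounds `|u| ≤ U` and `|b|, |bₓ| ≤ M e^{−νλ₁t}` control the numerator while
`|a| ≥ m e^{−νλ₀t}` controls the denominator. The ratio of the two exponentials decays since
`λ₀ < λ₁`, and a pointwise bound by a function tending to `0` also bounds the supremum over `x`. -/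

lemma coleHopf_sub_coleHopf_eq {ν a b a' b' : ℝ} (ha : a ≠ 0) (hab : a + b ≠ 0) :
    -2 * ν * (a' + b') / (a + b) - -2 * ν * a' / a
      = -(-2 * ν * (a' + b') / (a + b) * b + 2 * ν * b') / a := by
  field_simp
  ring

lemma abs_coleHopf_sub_coleHopf_le {ν U E m a b a' b' : ℝ} (hν : 0 ≤ ν) (hm : 0 < m)
    (ha : m ≤ |a|) (hab : a + b ≠ 0) (hU : |-2 * ν * (a' + b') / (a + b)| ≤ U)
    (hb : |b| ≤ E) (hb' : |b'| ≤ E) :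
    |-2 * ν * (a' + b') / (a + b) - -2 * ν * a' / a| ≤ (U + 2 * ν) * E / m := by
  set u := -2 * ν * (a' + b') / (a + b)
  have ha₀ : a ≠ 0 := abs_pos.mp (hm.trans_le ha)
  have hnum : |u * b + 2 * ν * b'| ≤ (U + 2 * ν) * E :=
    calc |u * b + 2 * ν * b'|
        ≤ |u| * |b| + 2 * ν * |b'| := by
          grw [abs_add_le, abs_mul, abs_mul, abs_of_nonneg (by positivity : 0 ≤ 2 * ν)]
      _ ≤ U * E + 2 * ν * E := by
          gcongr
          exact (abs_nonneg u).trans hU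
      _ = (U + 2 * ν) * E := by ring
  rw [coleHopf_sub_coleHopf_eq ha₀ hab, abs_div, abs_neg]
  exact div_le_div₀ ((abs_nonneg _).trans hnum) hnum hm ha

lemma mul_mul_exp_div_mul_exp (A B C c₁ c₀ : ℝ) :
    A * (B * Real.exp c₁) / (C * Real.exp c₀) = A * B / C * Real.exp (c₁ - c₀) := by
  rw [Real.exp_sub]
  field_simp

lemma tendsto_const_mul_exp_mul_atTop_of_neg {c : ℝ} (hc : c < 0) (C : ℝ) :
    Tendsto (fun t => C * Real.exp (c * t)) atTop (𝓝 0) := by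
  simpa using (Real.tendsto_exp_atBot.comp
    (tendsto_id.const_mul_atTop_of_neg hc)).const_mul C

/-- The index type may be empty, where the supremum is the junk value `0`; hence `max (g t) 0`. -/
lemma tendsto_iSup_of_eventually_le {α ι : Type*} {l : Filter α} {f : α → ι → ℝ} {g : α → ℝ}
    (hf : ∀ t i, 0 ≤ f t i) (hfg : ∀ᶠ t in l, ∀ i, f t i ≤ g t) (hg : Tendsto g l (𝓝 0)) :
    Tendsto (fun t => ⨆ i, f t i) l (𝓝 0) := by
  have hmax : Tendsto (fun t => max (g t) 0) l (𝓝 0) := by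
    simpa using hg.max (tendsto_const_nhds (x := (0 : ℝ)))
  refine squeeze_zero' (Eventually.of_forall fun t => Real.iSup_nonneg (hf t)) ?_ hmax
  filter_upwards [hfg] with t ht
  exact Real.iSup_le (fun i => (ht i).trans (le_max_left _ _)) (le_max_right _ _)

theorem burgers_stationary_solution_stable_general
    (ν l lam₀ lam₁ m M U : ℝ) (hν : 0 < ν) (hlam : lam₀ < lam₁)
    (hm : 0 < m)
    (φs φt : ℝ → ℝ → ℝ)
    (hφsdiff : ∀ t ≥ (0:ℝ), ∀ x ∈ Set.Icc 0 l, DifferentiableAt ℝ (fun y => φs y t) x)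
    (hφtdiff : ∀ t ≥ (0:ℝ), ∀ x ∈ Set.Icc 0 l, DifferentiableAt ℝ (fun y => φt y t) x)
    (φ : ℝ → ℝ → ℝ) (hφ : ∀ x t : ℝ, φ x t = φs x t + φt x t)
    (hφs_lower : ∀ x ∈ Set.Icc 0 l, ∀ t ≥ (0:ℝ),
      m * Real.exp (-ν * lam₀ * t) ≤ |φs x t|)
    (hφt_upper : ∀ x ∈ Set.Icc 0 l, ∀ t ≥ (0:ℝ),
      |φt x t| ≤ M * Real.exp (-ν * lam₁ * t))
    (hφtx_upper : ∀ x ∈ Set.Icc 0 l, ∀ t ≥ (0:ℝ),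
      |deriv (fun y => φt y t) x| ≤ M * Real.exp (-ν * lam₁ * t))
    (hφ0 : ∀ x ∈ Set.Icc 0 l, ∀ t ≥ (0:ℝ), φ x t ≠ 0)
    (u us : ℝ → ℝ → ℝ)
    (hu : ∀ x t : ℝ, u x t = -2 * ν * deriv (fun y => φ y t) x / φ x t)
    (hus : ∀ x t : ℝ, us x t = -2 * ν * deriv (fun y => φs y t) x / φs x t)
    (humax : ∀ x ∈ Set.Icc 0 l, ∀ t ≥ (0:ℝ), |u x t| ≤ U) :
    (∀ x ∈ Set.Icc 0 l, ∀ t ≥ (0:ℝ),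
      |u x t - us x t| ≤ ((U + 2 * ν) * M / m) * Real.exp (-ν * (lam₁ - lam₀) * t)) ∧
    Tendsto (fun t => ⨆ x : Set.Icc (0:ℝ) l, |u x t - us x t|) atTop (nhds 0) := by
  have pointwise : ∀ x ∈ Set.Icc 0 l, ∀ t ≥ (0:ℝ),
      |u x t - us x t| ≤ ((U + 2 * ν) * M / m) * Real.exp (-ν * (lam₁ - lam₀) * t) := by
    intro x hx t ht
    have hφ_deriv : deriv (fun y => φ y t) x
        = deriv (fun y => φs y t) x + deriv (fun y => φt y t) x := by
      simp_rw [hφ]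
      exact deriv_fun_add (hφsdiff t ht x hx) (hφtdiff t ht x hx)
    have hu_eq := hu x t
    rw [hφ_deriv, hφ] at hu_eq
    rw [hus, hu_eq, show -ν * (lam₁ - lam₀) * t = -ν * lam₁ * t - -ν * lam₀ * t by ring,
      ← mul_mul_exp_div_mul_exp]
    exact abs_coleHopf_sub_coleHopf_le hν.le (by positivity) (hφs_lower x hx t ht)
      (hφ x t ▸ hφ0 x hx t ht) (hu_eq ▸ humax x hx t ht) (hφt_upper x hx t ht)
      (hφtx_upper x hx t ht)
  refine ⟨pointwise, tendsto_iSup_of_eventually_le (fun _ _ => abs_nonneg _) ?_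
    (tendsto_const_mul_exp_mul_atTop_of_neg
      (mul_neg_of_neg_of_pos (neg_neg_of_pos hν) (sub_pos.2 hlam)) ((U + 2 * ν) * M / m))⟩
  filter_upwards [eventually_ge_atTop 0] with t ht
  exact fun x => pointwise x x.2 t ht

/-- Stability of the stationary solution: if the Cole–Hopf image `φ = φˢ + φ̃`
satisfies `|φˢ| ≥ m·exp(−νλ₀t)`, `|φ̃|, |φ̃_x| ≤ M·exp(−νλ₁t)` with `λ₀ < λ₁`,
and the Burgers solution `u = −2ν φ_x/φ` obeys `|u| ≤ U` (maximum principle), then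
`|u − uˢ| ≤ ((U + 2ν)M/m)·exp(−ν(λ₁ − λ₀)t)` on `[0, l]`, and in particular
`sup_{x∈[0,l]} |u − uˢ| → 0` as `t → ∞`. -/
theorem burgers_stationary_solution_stable
    (ν l lam₀ lam₁ m M U : ℝ) (hν : 0 < ν) (hl : 0 < l) (hlam : lam₀ < lam₁)
    (hm : 0 < m) (hM : 0 < M) (hU : 0 < U)
    (φs φt : ℝ → ℝ → ℝ)
    (hφsdiff : ∀ t ≥ (0:ℝ), ∀ x ∈ Set.Icc 0 l, DifferentiableAt ℝ (fun y => φs y t) x)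
    (hφtdiff : ∀ t ≥ (0:ℝ), ∀ x ∈ Set.Icc 0 l, DifferentiableAt ℝ (fun y => φt y t) x)
    (φ : ℝ → ℝ → ℝ) (hφ : ∀ x t : ℝ, φ x t = φs x t + φt x t)
    (hφs_lower : ∀ x ∈ Set.Icc 0 l, ∀ t ≥ (0:ℝ),
      m * Real.exp (-ν * lam₀ * t) ≤ |φs x t|)
    (hφt_upper : ∀ x ∈ Set.Icc 0 l, ∀ t ≥ (0:ℝ),
      |φt x t| ≤ M * Real.exp (-ν * lam₁ * t))
    (hφtx_upper : ∀ x ∈ Set.Icc 0 l, ∀ t ≥ (0:ℝ),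
      |deriv (fun y => φt y t) x| ≤ M * Real.exp (-ν * lam₁ * t))
    (hφ0 : ∀ x ∈ Set.Icc 0 l, ∀ t ≥ (0:ℝ), φ x t ≠ 0)
    (u us : ℝ → ℝ → ℝ)
    (hu : ∀ x t : ℝ, u x t = -2 * ν * deriv (fun y => φ y t) x / φ x t)
    (hus : ∀ x t : ℝ, us x t = -2 * ν * deriv (fun y => φs y t) x / φs x t)
    (humax : ∀ x ∈ Set.Icc 0 l, ∀ t ≥ (0:ℝ), |u x t| ≤ U) :
    (∀ x ∈ Set.Icc 0 l, ∀ t ≥ (0:ℝ),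
      |u x t - us x t| ≤ ((U + 2 * ν) * M / m) * Real.exp (-ν * (lam₁ - lam₀) * t)) ∧
    Tendsto (fun t => ⨆ x : Set.Icc (0:ℝ) l, |u x t - us x t|) atTop (nhds 0) :=
  burgers_stationary_solution_stable_general ν l lam₀ lam₁ m M U hν hlam hm φs φt hφsdiff hφtdiff φ
    hφ hφs_lower hφt_upper hφtx_upper hφ0 u us hu hus humax
end

section
/- Let ν > 0, l > 0, 0 < k₀ < k₁, x₀, x₁ ∈ ℝ, C > 0 with C·sin(k₀(x − x₀)) > 0 for all x ∈ [0, l], and α ≠ 0. Define the stationary solution uˢ(x) = −2ν k₀ cot(k₀(x − x₀)) and, for each t large enough that the denominator is nonvanishing on [0, l], define u(x, t) = −2ν [C k₀ cos(k₀(x − x₀)) + α k₁ cos(k₁(x − x₁)) exp(−ν(k₁² − k₀²)t)] / [C sin(k₀(x − x₀)) + α sin(k₁(x − x₁)) exp(−ν(k₁² − k₀²)t)]. Then (1/t)·ln( sup_{x ∈ [0, l]} |u(x, t) − uˢ(x)| ) converges to −ν(k₁² − k₀²) as t → ∞; that is, the Lyapunov exponent of u with respect to the maximum norm equals −ν(λ₁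 − λ₀) with λ₀ = k₀², λ₁ = k₁². -/
/-!
Writing `s₀ = sin (k₀ (x - x₀))`, `s₁ = sin (k₁ (x - x₁))` and `E = exp (-ν (k₁² - k₀²) t)`,
the deviation is `u - uˢ = -2ν α W E / ((C s₀ + α s₁ E) s₀)`, where
`W = k₁ cos (k₁ (x - x₁)) s₀ - k₀ cos (k₀ (x - x₀)) s₁` is the Wronskian of the two modes.
As `s₀` is bounded below on `[0, l]`, the sup of `|u - uˢ|` is `O(E)`; it is also `≳ E` because
`W` does not vanish identically on `[0, l]`: `W' = (k₀² - k₁²) s₀ s₁`, so `W ≡ 0` on an interval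
would force `s₁ ≡ 0` there. Hence `log ‖u - uˢ‖ = -ν (k₁² - k₀²) t + O(1)`.
-/

open Filter Real Set Topology

theorem tendsto_log_div_of_exp_bounds {f : ℝ → ℝ} {a c₁ c₂ : ℝ} (hc₁ : 0 < c₁)
    (h : ∀ᶠ t in atTop, c₁ * exp (a * t) ≤ f t ∧ f t ≤ c₂ * exp (a * t)) :
    Tendsto (fun t => log (f t) / t) atTop (𝓝 a) := by
  have hlim : ∀ c, 0 < c → Tendsto (fun t => log (c * exp (a * t)) / t) atTop (𝓝 a) := by
    intro c hc
    have : Tendsto (fun t : ℝ => log c / t + a) atTop (𝓝 a) := by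
      simpa using (tendsto_id.const_div_atTop (log c)).add_const a
    refine this.congr' ?_
    filter_upwards [eventually_ne_atTop 0] with t ht
    rw [log_mul hc.ne' (exp_pos _).ne', log_exp]
    field_simp
  have hc₂ : 0 < c₂ := by
    obtain ⟨t, hlo, hhi⟩ := h.exists
    exact hc₁.trans_le (le_of_mul_le_mul_right (hlo.trans hhi) (exp_pos _))
  have hpos : ∀ t, 0 < c₁ * exp (a * t) := fun t => by positivity
  refine tendsto_of_tendsto_of_tendsto_of_le_of_le' (hlim c₁ hc₁) (hlim c₂ hc₂) ?_ ?_
  all_goals filter_upwards [h, eventually_gt_atTop 0] with t ⟨hlo, hhi⟩ ht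
  · exact div_le_div_of_nonneg_right (log_le_log (hpos t) hlo) ht.le
  · exact div_le_div_of_nonneg_right (log_le_log ((hpos t).trans_le hlo) hhi) ht.le

theorem HasDerivAt.eq_zero_of_eventuallyEq_const {f : ℝ → ℝ} {f' x c : ℝ}
    (hf : HasDerivAt f f' x) (h : f =ᶠ[𝓝 x] fun _ => c) : f' = 0 :=
  hf.unique ((hasDerivAt_const x c).congr_of_eventuallyEq h)

theorem exists_sin_affine_ne_zero {k c a b : ℝ} (hk : k ≠ 0) (hab : a < b) :
    ∃ x ∈ Ioo a b, sin (k * (x - c)) ≠ 0 := by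
  by_contra! hzero
  obtain ⟨x, hx⟩ := nonempty_Ioo.2 hab
  have hderiv : HasDerivAt (fun y => sin (k * (y - c))) (cos (k * (x - c)) * k) x := by
    simpa using (((hasDerivAt_id x).sub_const c).const_mul k).sin
  have hcos : cos (k * (x - c)) = 0 := by
    have := hderiv.eq_zero_of_eventuallyEq_const
      (eventually_of_mem (isOpen_Ioo.mem_nhds hx) hzero)
    simpa [hk] using this
  have := sin_sq_add_cos_sq (k * (x - c))
  rw [hzero x hx, hcos] at this
  norm_num at this

section TwoMode

variable {ν k₀ k₁ x₀ x₁ C α m E x : ℝ}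

variable (k₀ k₁ x₀ x₁) in
noncomputable def sinWronskian (x : ℝ) : ℝ :=
  k₁ * cos (k₁ * (x - x₁)) * sin (k₀ * (x - x₀)) - k₀ * cos (k₀ * (x - x₀)) * sin (k₁ * (x - x₁))

variable (k₀ k₁ x₀ x₁) in
theorem hasDerivAt_sinWronskian (x : ℝ) :
    HasDerivAt (sinWronskian k₀ k₁ x₀ x₁)
      ((k₀ ^ 2 - k₁ ^ 2) * sin (k₀ * (x - x₀)) * sin (k₁ * (x - x₁))) x := by
  have h₀ : HasDerivAt (fun y => k₀ * (y - x₀)) k₀ x := by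
    simpa using ((hasDerivAt_id x).sub_const x₀).const_mul k₀
  have h₁ : HasDerivAt (fun y => k₁ * (y - x₁)) k₁ x := by
    simpa using ((hasDerivAt_id x).sub_const x₁).const_mul k₁
  have := ((h₁.cos.const_mul k₁).mul h₀.sin).sub ((h₀.cos.const_mul k₀).mul h₁.sin)
  exact this.congr_deriv (by ring)

theorem abs_sinWronskian_le (hk₀ : 0 ≤ k₀) (hk₁ : 0 ≤ k₁) :
    |sinWronskian k₀ k₁ x₀ x₁ x| ≤ k₀ + k₁ := by
  have hterm : ∀ k a b, 0 ≤ k → |k * cos a * sin b| ≤ k := fun k a b hk => by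
    rw [mul_assoc, abs_mul, abs_of_nonneg hk, abs_mul]
    exact mul_le_of_le_one_right hk
      (mul_le_one₀ (abs_cos_le_one a) (abs_nonneg _) (abs_sin_le_one b))
  unfold sinWronskian
  linarith [abs_sub (k₁ * cos (k₁ * (x - x₁)) * sin (k₀ * (x - x₀)))
    (k₀ * cos (k₀ * (x - x₀)) * sin (k₁ * (x - x₁))),
    hterm k₁ (k₁ * (x - x₁)) (k₀ * (x - x₀)) hk₁, hterm k₀ (k₀ * (x - x₀)) (k₁ * (x - x₁)) hk₀]

theorem exists_sinWronskian_ne_zero {a b : ℝ} (hab : a < b) (hk₁ : k₁ ≠ 0)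
    (hk : k₀ ^ 2 ≠ k₁ ^ 2) (hsin : ∀ x ∈ Ioo a b, sin (k₀ * (x - x₀)) ≠ 0) :
    ∃ x ∈ Ioo a b, sinWronskian k₀ k₁ x₀ x₁ x ≠ 0 := by
  by_contra! hW
  obtain ⟨x, hx, hsin₁⟩ := exists_sin_affine_ne_zero (c := x₁) hk₁ hab
  have := (hasDerivAt_sinWronskian k₀ k₁ x₀ x₁ x).eq_zero_of_eventuallyEq_const
    (eventually_of_mem (isOpen_Ioo.mem_nhds hx) hW)
  simp [sub_eq_zero, hk, hsin x hx, hsin₁] at this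

variable (ν k₀ k₁ x₀ x₁ C α) in
/-- The Cole–Hopf image `-2ν φ_x / φ` of `φ = C s₀ + α s₁ E`, with the common factor
`exp (-ν k₀² t)` of `φ` cancelled and `E` standing for `exp (-ν (k₁² - k₀²) t)`. -/
noncomputable def twoModeSolution (E x : ℝ) : ℝ :=
  -2 * ν * (C * k₀ * cos (k₀ * (x - x₀)) + α * k₁ * cos (k₁ * (x - x₁)) * E)
    / (C * sin (k₀ * (x - x₀)) + α * sin (k₁ * (x - x₁)) * E)

theorem twoModeSolution_sub_cot (h₀ : sin (k₀ * (x - x₀)) ≠ 0)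
    (hD : C * sin (k₀ * (x - x₀)) + α * sin (k₁ * (x - x₁)) * E ≠ 0) :
    twoModeSolution ν k₀ k₁ x₀ x₁ C α E x - -2 * ν * k₀ * cot (k₀ * (x - x₀))
      = -2 * ν * α * sinWronskian k₀ k₁ x₀ x₁ x * E
        / ((C * sin (k₀ * (x - x₀)) + α * sin (k₁ * (x - x₁)) * E) * sin (k₀ * (x - x₀))) := by
  rw [twoModeSolution, sinWronskian, cot_eq_cos_div_sin, mul_div_assoc', div_sub_div _ _ hD h₀]
  ring

theorem twoMode_denominator_bounds (hC : 0 ≤ C) (hs : m ≤ sin (k₀ * (x - x₀))) (hE : 0 ≤ E)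
    (hE₁ : E ≤ 1) (hαE : |α| * E ≤ C * m / 2) :
    C * m / 2 ≤ C * sin (k₀ * (x - x₀)) + α * sin (k₁ * (x - x₁)) * E ∧
      C * sin (k₀ * (x - x₀)) + α * sin (k₁ * (x - x₁)) * E ≤ C + |α| := by
  have hpert : |α * sin (k₁ * (x - x₁)) * E| ≤ |α| * E := by
    rw [abs_mul, abs_mul, abs_of_nonneg hE]
    gcongr
    exact mul_le_of_le_one_right (abs_nonneg α) (abs_sin_le_one _)
  have hCs : C * m ≤ C * sin (k₀ * (x - x₀)) := mul_le_mul_of_nonneg_left hs hC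
  have hCs' : C * sin (k₀ * (x - x₀)) ≤ C := mul_le_of_le_one_right hC (sin_le_one _)
  have hαE₁ : |α| * E ≤ |α| := mul_le_of_le_one_right (abs_nonneg α) hE₁
  constructor <;> linarith [abs_le.1 hpert]

/-- `|u - uˢ| = 2ν|α||W|E / (D s₀)` with `C m / 2 ≤ D ≤ C + |α|` and `m ≤ s₀ ≤ 1`. -/
theorem abs_twoModeSolution_sub_cot_mem_Icc (hν : 0 ≤ ν) (hC : 0 < C) (hm : 0 < m)
    (hs : m ≤ sin (k₀ * (x - x₀))) (hE : 0 ≤ E) (hE₁ : E ≤ 1) (hαE : |α| * E ≤ C * m / 2) :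
    |twoModeSolution ν k₀ k₁ x₀ x₁ C α E x - -2 * ν * k₀ * cot (k₀ * (x - x₀))| ∈
      Icc (2 * ν * |α| * |sinWronskian k₀ k₁ x₀ x₁ x| / (C + |α|) * E)
        (2 * ν * |α| * |sinWronskian k₀ k₁ x₀ x₁ x| / (C * m / 2 * m) * E) := by
  obtain ⟨hDlo, hDhi⟩ := twoMode_denominator_bounds (k₁ := k₁) (x₁ := x₁) hC.le hs hE hE₁ hαE
  have hs₀ : 0 < sin (k₀ * (x - x₀)) := hm.trans_le hs
  have hDpos : 0 < C * m / 2 := by positivity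
  rw [twoModeSolution_sub_cot hs₀.ne' (hDpos.trans_le hDlo).ne', abs_div,
    abs_of_pos (mul_pos (hDpos.trans_le hDlo) hs₀), div_mul_eq_mul_div, div_mul_eq_mul_div]
  have hnum : |-2 * ν * α * sinWronskian k₀ k₁ x₀ x₁ x * E|
      = 2 * ν * |α| * |sinWronskian k₀ k₁ x₀ x₁ x| * E := by
    simp only [abs_mul, abs_neg, abs_two, abs_of_nonneg hν, abs_of_nonneg hE]
  rw [hnum]
  have hDs : C * m / 2 * m ≤ (C * sin (k₀ * (x - x₀)) + α * sin (k₁ * (x - x₁)) * E)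
      * sin (k₀ * (x - x₀)) := mul_le_mul hDlo hs hm.le (hDpos.trans_le hDlo).le
  have hDs' : (C * sin (k₀ * (x - x₀)) + α * sin (k₁ * (x - x₁)) * E) * sin (k₀ * (x - x₀))
      ≤ C + |α| := by nlinarith [hDhi, sin_le_one (k₀ * (x - x₀))]
  exact ⟨div_le_div_of_nonneg_left (by positivity) ((mul_pos hDpos hm).trans_le hDs) hDs',
    div_le_div_of_nonneg_left (by positivity) (by positivity) hDs⟩

end TwoMode

/-- Lyapunov exponent for Burgers' equation: for the explicit two-mode solution
`u(x,t)` (the Cole–Hopf image of `C sin(k₀(x−x₀))e^{−νk₀²t} + α sin(k₁(x−x₁))e^{−νk₁²t}`)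
approaching the stationary solution `uˢ(x) = −2ν k₀ cot(k₀(x−x₀))`, the Lyapunov
exponent with respect to the maximum norm is `−ν(k₁² − k₀²) = −ν(λ₁ − λ₀)`. -/
theorem burgers_lyapunov_exponent_two_mode
    (ν l k₀ k₁ x₀ x₁ C α : ℝ) (hν : 0 < ν) (hl : 0 < l)
    (hk₀ : 0 < k₀) (hk : k₀ < k₁) (hα : α ≠ 0)
    (hC : 0 < C)
    (hCsin : ∀ x ∈ Set.Icc 0 l, 0 < C * Real.sin (k₀ * (x - x₀)))
    (us : ℝ → ℝ) (hus : ∀ x : ℝ, us x = -2 * ν * k₀ * Real.cot (k₀ * (x - x₀)))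
    (u : ℝ → ℝ → ℝ)
    (hu : ∀ x t : ℝ, u x t =
      -2 * ν * (C * k₀ * Real.cos (k₀ * (x - x₀))
          + α * k₁ * Real.cos (k₁ * (x - x₁)) * Real.exp (-ν * (k₁ ^ 2 - k₀ ^ 2) * t))
        / (C * Real.sin (k₀ * (x - x₀))
          + α * Real.sin (k₁ * (x - x₁)) * Real.exp (-ν * (k₁ ^ 2 - k₀ ^ 2) * t))) :
    Tendsto (fun t => Real.log (⨆ x : Set.Icc (0:ℝ) l, |u x t - us x|) / t)
      atTop (nhds (-ν * (k₁ ^ 2 - k₀ ^ 2))) := by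
  have hsin : ∀ x ∈ Icc 0 l, 0 < sin (k₀ * (x - x₀)) := fun x hx =>
    pos_of_mul_pos_right (hCsin x hx) hC.le
  obtain ⟨xm, hxm, hmin⟩ := isCompact_Icc.exists_isMinOn (nonempty_Icc.2 hl.le)
    (f := fun x => sin (k₀ * (x - x₀))) (by fun_prop)
  set m := sin (k₀ * (xm - x₀))
  have hm : 0 < m := hsin xm hxm
  obtain ⟨xs, hxs, hW⟩ := exists_sinWronskian_ne_zero (x₁ := x₁) hl (hk₀.trans hk).ne'
    (by nlinarith) fun x hx => (hsin x (Ioo_subset_Icc_self hx)).ne'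
  have hrate : -ν * (k₁ ^ 2 - k₀ ^ 2) < 0 :=
    mul_neg_of_neg_of_pos (neg_neg_of_pos hν) (by nlinarith)
  have hE : Tendsto (fun t => exp (-ν * (k₁ ^ 2 - k₀ ^ 2) * t)) atTop (𝓝 0) :=
    tendsto_exp_atBot.comp (tendsto_id.const_mul_atTop_of_neg hrate)
  refine tendsto_log_div_of_exp_bounds (c₂ := 2 * ν * |α| * (k₀ + k₁) / (C * m / 2 * m))
    (by positivity : 0 < 2 * ν * |α| * |sinWronskian k₀ k₁ x₀ x₁ xs| / (C + |α|)) ?_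
  filter_upwards [hE.eventually_le_const one_pos,
    hE.eventually_le_const (by positivity : 0 < C * m / 2 / |α|)] with t hE₁ hαE
  rw [le_div_iff₀' (abs_pos.2 hα)] at hαE
  have hdev : ∀ x : Icc 0 l, |u x t - us x| ∈ Icc _ _ := fun x => by
    rw [hu, hus]
    exact abs_twoModeSolution_sub_cot_mem_Icc (k₁ := k₁) (x₁ := x₁) hν.le hC hm (hmin x.2)
      (exp_pos _).le hE₁ hαE
  have := (nonempty_Icc.2 hl.le).to_subtype
  have hupper : ∀ x : Icc 0 l, |u x t - us x| ≤ 2 * ν * |α| * (k₀ + k₁) / (C * m / 2 * m) *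
      exp (-ν * (k₁ ^ 2 - k₀ ^ 2) * t) := fun x =>
    (hdev x).2.trans (by gcongr; exact abs_sinWronskian_le hk₀.le (hk₀.trans hk).le)
  exact ⟨(hdev ⟨xs, Ioo_subset_Icc_self hxs⟩).1.trans (le_ciSup ⟨_, forall_mem_range.2 hupper⟩ _),
    ciSup_le hupper⟩
end
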